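/- arXiv:1304.3680 — 9 statements merged into one kernel-verified Lean document; each statement's English description precedes it below -/
import Mathlib

section
/- Let A ⊆ ℝ^d be a nonempty compact set, z ∈ ℝ^d a point, and α a real number with 0 ≤ α < reach(A). If A ∩ closedBall(z, α) ≠ ∅, then reach(A ∩ closedBall(z, α)) ≥ reach(A). -/
set_option maxHeartbeats 1000000

open Metric Set ENNReal RealInnerProductSpace

variable {d : ℕ}

/-- A point of a set minimizes distance iff its distance equals the infDist. -/
lemma reach_nearest_iff {A : Set (EuclideanSpace ℝ (Fin d))} (hA : A.Nonempty)
    {y x : EuclideanSpace ℝ (Fin d)} (hx : x ∈ A) :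
    (∀ x' ∈ A, dist y x ≤ dist y x') ↔ dist y x = infDist y A := by
  constructor
  · intro h
    refine le_antisymm ?_ (infDist_le_dist_of_mem hx)
    by_contra hlt
    push_neg at hlt
    obtain ⟨x', hx', hd⟩ := (infDist_lt_iff hA).1 hlt
    exact absurd (h x' hx') (not_le.2 hd)
  · intro h x' hx'
    exact h ▸ infDist_le_dist_of_mem hx'

lemma reach_proj_cont {A : Set (EuclideanSpace ℝ (Fin d))} (hAc : IsCompact A) {r : ℝ≥0∞}
    (huniq : ∀ y : EuclideanSpace ℝ (Fin d), ENNReal.ofReal (infDist y A) < r →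
      ∃! x, x ∈ A ∧ ∀ x' ∈ A, dist y x ≤ dist y x')
    {p ξp : EuclideanSpace ℝ (Fin d)} (hp : ENNReal.ofReal (infDist p A) < r)
    (hξpA : ξp ∈ A) (hξpd : dist p ξp = infDist p A) {η : ℝ} (hη : 0 < η) :
    ∃ δ > 0, ∀ q b : EuclideanSpace ℝ (Fin d), dist q p < δ → b ∈ A →
      dist q b = infDist q A → dist b ξp < η := by
  have hA : A.Nonempty := ⟨ξp, hξpA⟩
  by_contra hcon
  push_neg at hcon
  choose q b hq hb hbd hfar using fun n : ℕ => hcon (1 / (n + 1)) (by positivity)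
  have hqp : Filter.Tendsto q Filter.atTop (nhds p) := by
    rw [tendsto_iff_dist_tendsto_zero]
    refine squeeze_zero (fun n => dist_nonneg) (fun n => (hq n).le) ?_
    exact tendsto_one_div_add_atTop_nhds_zero_nat
  obtain ⟨binf, hbinfA, φ, hφ, hbφ⟩ := hAc.tendsto_subseq hb
  have hqφ : Filter.Tendsto (q ∘ φ) Filter.atTop (nhds p) := hqp.comp hφ.tendsto_atTop
  have hd1 : Filter.Tendsto (fun n => dist (q (φ n)) (b (φ n))) Filter.atTop
      (nhds (dist p binf)) := hqφ.dist hbφ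
  have hd2 : Filter.Tendsto (fun n => dist (q (φ n)) (b (φ n))) Filter.atTop
      (nhds (infDist p A)) := by
    have : Filter.Tendsto (fun n => infDist (q (φ n)) A) Filter.atTop (nhds (infDist p A)) :=
      ((continuous_infDist_pt A).tendsto p).comp hqφ
    simpa only [fun n => hbd (φ n)] using this
  have hbinfd : dist p binf = infDist p A := tendsto_nhds_unique hd1 hd2
  -- uniqueness at p forces binf = ξp
  obtain ⟨x0, _, hx0u⟩ := huniq p hp
  have h1 : binf = x0 := hx0u binf ⟨hbinfA, (reach_nearest_iff hA hbinfA).2 hbinfd⟩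
  have h2 : ξp = x0 := hx0u ξp ⟨hξpA, (reach_nearest_iff hA hξpA).2 hξpd⟩
  have hfar' : η ≤ dist binf ξp := by
    have : Filter.Tendsto (fun n => dist (b (φ n)) ξp) Filter.atTop (nhds (dist binf ξp)) :=
      hbφ.dist tendsto_const_nhds
    exact ge_of_tendsto' this (fun n => hfar (φ n))
  rw [h1, h2] at hfar'
  simp only [dist_self] at hfar'
  exact absurd hfar' (not_le.2 hη)


lemma reach_exists_far_point {A : Set (EuclideanSpace ℝ (Fin d))} (hAc : IsCompact A)
    (hA : A.Nonempty) {r : ℝ≥0∞}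
    (huniq : ∀ y : EuclideanSpace ℝ (Fin d), ENNReal.ofReal (infDist y A) < r →
      ∃! x, x ∈ A ∧ ∀ x' ∈ A, dist y x ≤ dist y x')
    (m : EuclideanSpace ℝ (Fin d)) (R' : ℝ)
    (ht0 : 0 < infDist m A) (hR1 : infDist m A < R') (hR2 : ENNReal.ofReal R' < r) :
    ∃ w : EuclideanSpace ℝ (Fin d), dist w m ≤ R' - infDist m A ∧ R' ≤ infDist w A := by
  set g : EuclideanSpace ℝ (Fin d) → ℝ := fun y => infDist y A with hg
  set t : ℝ := infDist m A with htdef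
  set M : ℝ → ℝ := fun l => sSup (g '' closedBall m l) with hM
  have hmax : ∀ l : ℝ, 0 ≤ l → ∃ y, y ∈ closedBall m l ∧ g y = M l ∧
      ∀ q ∈ closedBall m l, g q ≤ g y := by
    intro l hl
    obtain ⟨y, hy, hymax⟩ := (isCompact_closedBall m l).exists_isMaxOn
      (nonempty_closedBall.2 hl) ((continuous_infDist_pt A).continuousOn)
    refine ⟨y, hy, ?_, fun q hq => hymax hq⟩
    refine (IsGreatest.csSup_eq ⟨mem_image_of_mem g hy, ?_⟩).symm
    rintro _ ⟨q, hq, rfl⟩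
    exact hymax hq
  have M0 : M 0 = t := by
    rw [hM]
    simp [Metric.closedBall_zero, hg, htdef]
  have Mmono : ∀ l1 l2 : ℝ, 0 ≤ l1 → l1 ≤ l2 → M l1 ≤ M l2 := by
    intro l1 l2 hl1 h12
    obtain ⟨y1, hy1, hgy1, _⟩ := hmax l1 hl1
    obtain ⟨y2, _, hgy2, hbd2⟩ := hmax l2 (hl1.trans h12)
    rw [← hgy1, ← hgy2]
    exact hbd2 y1 (closedBall_subset_closedBall h12 hy1)
  have Mlip : ∀ l1 l2 : ℝ, 0 ≤ l1 → l1 ≤ l2 → M l2 ≤ M l1 + (l2 - l1) := by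
    intro l1 l2 hl1 h12
    obtain ⟨y1, hy1, hgy1, hbd1⟩ := hmax l1 hl1
    obtain ⟨y2, hy2, hgy2, _⟩ := hmax l2 (hl1.trans h12)
    have hy2l2 : dist y2 m ≤ l2 := mem_closedBall.1 hy2
    rcases le_or_gt (dist y2 m) l1 with hD | hD
    · have h1 : g y2 ≤ g y1 := hbd1 y2 (mem_closedBall.2 hD)
      rw [← hgy2, ← hgy1] at *
      linarith
    · set D := dist y2 m with hDdef
      have hD0 : 0 < D := lt_of_le_of_lt hl1 hD
      set c : ℝ := l1 / D with hcdef
      have hc0 : 0 ≤ c := div_nonneg hl1 hD0.le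
      have hc1 : c ≤ 1 := (div_le_one hD0).2 hD.le
      have hcD : c * D = l1 := div_mul_cancel₀ l1 hD0.ne'
      set y' := m + c • (y2 - m) with hy'def
      have hnorm : ‖y2 - m‖ = D := (dist_eq_norm y2 m) ▸ rfl
      have h1 : y' - m = c • (y2 - m) := by rw [hy'def]; abel
      have hy'm : dist y' m = l1 := by
        rw [dist_eq_norm, h1, norm_smul, Real.norm_eq_abs, abs_of_nonneg hc0, hnorm, hcD]
      have h2 : y2 - y' = (1 - c) • (y2 - m) := by
        rw [hy'def, sub_smul, one_smul]; abel
      have hy2y' : dist y2 y' = D - l1 := by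
        rw [dist_eq_norm, h2, norm_smul, Real.norm_eq_abs, abs_of_nonneg (by linarith), hnorm,
          sub_mul, one_mul, hcD]
      have hstep : g y2 ≤ g y' + dist y2 y' := infDist_le_infDist_add_dist
      have hgy' : g y' ≤ M l1 := hgy1 ▸ hbd1 y' (mem_closedBall.2 hy'm.le)
      rw [← hgy2]
      rw [hy2y'] at hstep
      linarith
  set Λ : ℝ := R' - t with hΛdef
  have hΛ0 : 0 < Λ := by rw [hΛdef]; linarith
  -- continuity of M on [0, Λ]
  have hMcont : ContinuousOn M (Icc 0 Λ) := by
    refine LipschitzOnWith.continuousOn (K := 1) (LipschitzOnWith.of_dist_le_mul ?_)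
    intro a ha b hb
    rw [NNReal.coe_one, one_mul, Real.dist_eq, Real.dist_eq]
    rcases le_total a b with hab | hab
    · have h1 := Mmono a b ha.1 hab
      have h2 := Mlip a b ha.1 hab
      rw [abs_of_nonpos (by linarith), abs_of_nonpos (by linarith)]
      linarith
    · have h1 := Mmono b a hb.1 hab
      have h2 := Mlip b a hb.1 hab
      rw [abs_of_nonneg (by linarith), abs_of_nonneg (by linarith)]
      linarith
  -- the fencing bound
  have bound : ∀ x ∈ Ico (0:ℝ) Λ, ∀ cc : ℝ, (0:ℝ) < cc →
      ∃ᶠ zz in nhdsWithin x (Ioi x), slope (fun l => t + l - M l) x zz < cc := by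
    intro l hl cc hcc
    set c' := min cc 1 with hc'def
    have hc'0 : 0 < c' := lt_min hcc zero_lt_one
    have hc'1 : c' ≤ 1 := min_le_right _ _
    suffices h : ∀ᶠ zz in nhdsWithin l (Ioi l), slope (fun l => t + l - M l) l zz < c' by
      exact (h.mono (fun zz hz => hz.trans_le (min_le_left _ _))).frequently
    obtain ⟨y0, hy0ball, hgy0, hbd0⟩ := hmax l hl.1
    set D := g y0 with hDdef
    have hDt : t ≤ D := by
      have h := Mmono 0 l le_rfl hl.1
      rw [M0] at h; rw [hgy0]; exact h
    have hD0 : 0 < D := lt_of_lt_of_le ht0 hDt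
    have hDle : D ≤ t + l := by
      have h := Mlip 0 l le_rfl hl.1
      rw [M0] at h; rw [hgy0]; linarith
    have hDR : D < R' := by have := hl.2; rw [hΛdef] at this; linarith
    have hDr : ENNReal.ofReal D < r := lt_of_le_of_lt (ENNReal.ofReal_le_ofReal hDR.le) hR2
    obtain ⟨ξ0, hξ0A, hξ0d⟩ := hAc.exists_infDist_eq_dist hA y0
    obtain ⟨δ, hδ0, hδ⟩ := reach_proj_cont hAc huniq (p := y0) (ξp := ξ0)
      hDr hξ0A hξ0d.symm (mul_pos hc'0 hD0)
    set ε1 := min δ (Λ - l) with hε1def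
    have hε10 : 0 < ε1 := lt_min hδ0 (by linarith [hl.2])
    filter_upwards [Ioo_mem_nhdsGT_of_mem (Set.left_mem_Ico.2 (lt_add_of_pos_right l hε10))]
      with zz hzz
    obtain ⟨hz1, hz2⟩ := hzz
    set ε := zz - l with hεdef
    have hε0 : 0 < ε := by rw [hεdef]; linarith
    have hεδ : ε < δ := by
      have : ε < ε1 := by rw [hεdef]; linarith
      exact this.trans_le (min_le_left _ _)
    have hzzΛ : zz ≤ Λ := by
      have : ε < ε1 := by rw [hεdef]; linarith
      have h2 := min_le_right δ (Λ - l)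
      rw [hεdef] at this; linarith [this.trans_le h2]
    have hnormyξ : ‖y0 - ξ0‖ = D := by
      rw [← dist_eq_norm, ← hξ0d]
    set u : EuclideanSpace ℝ (Fin d) := D⁻¹ • (y0 - ξ0) with hudef
    have hu : ‖u‖ = 1 := by
      rw [hudef, norm_smul, Real.norm_eq_abs, abs_of_nonneg (inv_nonneg.2 hD0.le), hnormyξ,
        inv_mul_cancel₀ hD0.ne']
    set q : EuclideanSpace ℝ (Fin d) := y0 + ε • u with hqdef
    have hqy0 : dist q y0 = ε := by
      have h1 : q - y0 = ε • u := by rw [hqdef]; abel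
      rw [dist_eq_norm, h1, norm_smul, Real.norm_eq_abs, abs_of_nonneg hε0.le, hu, mul_one]
    have hqball : q ∈ closedBall m zz := by
      rw [mem_closedBall]
      calc dist q m ≤ dist q y0 + dist y0 m := dist_triangle _ _ _
        _ ≤ ε + l := add_le_add hqy0.le (mem_closedBall.1 hy0ball)
        _ = zz := by rw [hεdef]; ring
    obtain ⟨b1, hb1A, hb1d⟩ := hAc.exists_infDist_eq_dist hA q
    have hfar : dist b1 ξ0 < c' * D := hδ q b1 (by rw [hqy0]; exact hεδ) hb1A hb1d.symm
    -- inner product estimates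
    have hsplit : y0 - b1 = (y0 - ξ0) + (ξ0 - b1) := by abel
    have e2 : ⟪y0 - ξ0, u⟫ = D := by
      rw [hudef, real_inner_smul_right, real_inner_self_eq_norm_sq, hnormyξ, sq,
        ← mul_assoc, inv_mul_cancel₀ hD0.ne', one_mul]
    have e3 : |⟪ξ0 - b1, u⟫| ≤ dist ξ0 b1 := by
      calc |⟪ξ0 - b1, u⟫| ≤ ‖ξ0 - b1‖ * ‖u‖ := abs_real_inner_le_norm _ _
        _ = dist ξ0 b1 := by rw [hu, mul_one, dist_eq_norm]
    have e5 : ⟪y0 - b1, u⟫ > D - c' * D := by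
      rw [hsplit, inner_add_left, e2]
      have := abs_le.1 e3
      rw [dist_comm b1 ξ0] at hfar
      linarith [this.1]
    have e4 : D ≤ ‖y0 - b1‖ := by
      rw [← dist_eq_norm]
      exact infDist_le_dist_of_mem hb1A
    have e1 : ‖q - b1‖ ^ 2 = ‖y0 - b1‖ ^ 2 + 2 * (ε * ⟪y0 - b1, u⟫) + ε ^ 2 := by
      have h1 : q - b1 = (y0 - b1) + ε • u := by rw [hqdef]; abel
      rw [h1, norm_add_sq_real, real_inner_smul_right, norm_smul, Real.norm_eq_abs,
        abs_of_nonneg hε0.le, hu, mul_one]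
    clear_value c' D ε1 ε u q t Λ
    have key : D + (1 - c') * ε < g q := by
      have hgq : g q = ‖q - b1‖ := by rw [← dist_eq_norm]; exact hb1d
      rw [hgq]
      have hY2 : D ^ 2 ≤ ‖y0 - b1‖ ^ 2 := pow_le_pow_left₀ hD0.le e4 2
      have hI : 2 * (ε * (D - c' * D)) < 2 * (ε * ⟪y0 - b1, u⟫) := by
        have h7 := mul_lt_mul_of_pos_left e5 hε0
        linarith
      have hε2 : ((1 - c') * ε) ^ 2 ≤ ε ^ 2 := by
        have h8 : (1 - c') * ε ≤ ε := by
          have := mul_le_mul_of_nonneg_right (by linarith : (1 - c') ≤ 1) hε0.le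
          linarith
        exact pow_le_pow_left₀ (mul_nonneg (by linarith) hε0.le) h8 2
      have hexp : (D + (1 - c') * ε) ^ 2 = D ^ 2 + 2 * (ε * (D - c' * D)) + ((1 - c') * ε) ^ 2 := by
        ring
      have hq2 : (D + (1 - c') * ε) ^ 2 < ‖q - b1‖ ^ 2 := by
        rw [hexp, e1]
        have := add_lt_add_of_le_of_lt hY2 hI
        linarith [hε2]
      exact lt_of_pow_lt_pow_left₀ 2 (norm_nonneg _) hq2
    -- conclude slope bound
    have hMz : M l + (1 - c') * ε < M zz := by
      obtain ⟨yz, _, hgyz, hbdz⟩ := hmax zz (hl.1.trans hz1.le)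
      have h6 : g q ≤ M zz := hgyz ▸ hbdz q hqball
      rw [← hgy0]
      exact lt_of_lt_of_le key h6
    have hslo : slope (fun l => t + l - M l) l zz = (ε - (M zz - M l)) / ε := by
      rw [slope_def_field, hεdef]
      ring_nf
    rw [hslo, div_lt_iff₀ hε0]
    linarith [hMz]
  have hfc : ContinuousOn (fun l => t + l - M l) (Icc 0 Λ) :=
    (ContinuousOn.add continuousOn_const continuousOn_id).sub hMcont
  have ffix : t + 0 - M 0 ≤ 0 := by rw [M0]; ring_nf; exact le_rfl
  have hfence := image_le_of_liminf_slope_right_le_deriv_boundary (f := fun l => t + l - M l)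
    (B := fun _ => 0) (B' := fun _ => 0) hfc ffix continuousOn_const
    (fun x _ => hasDerivWithinAt_const x (Ici x) (0:ℝ)) bound (right_mem_Icc.2 hΛ0.le)
  have hMΛ : R' ≤ M Λ := by
    have h9 : t + Λ - M Λ ≤ 0 := hfence
    rw [hΛdef] at h9 ⊢
    linarith
  obtain ⟨w, hwball, hgw, _⟩ := hmax Λ hΛ0.le
  refine ⟨w, ?_, ?_⟩
  · have := mem_closedBall.1 hwball
    rw [hΛdef] at this
    exact this
  · have : R' ≤ g w := by rw [hgw]; exact hMΛ
    exact this

private lemma aux_le_of_sq_le_sq {a b : ℝ} (ha : 0 ≤ a) (hb : 0 ≤ b) (h : a^2 ≤ b^2) :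
    a ≤ b := by nlinarith

private lemma aux_half_le {δ ρ : ℝ} (hδ : 0 ≤ δ) (hρ : 0 ≤ ρ) (h : δ^2/4 ≤ ρ^2) :
    δ/2 ≤ ρ := by nlinarith

private lemma aux_dy_lt {dy ρ δ : ℝ} (hdy : 0 ≤ dy) (hρ : 0 ≤ ρ) (hδ : 0 < δ)
    (h : dy^2 = ρ^2 - δ^2/4) : dy < ρ := by nlinarith

private lemma aux_zmp {nzm dzx dzb α δ : ℝ} (h : nzm^2 = (dzx^2 + dzb^2)/2 - δ^2/4)
    (d1 : dzx ≤ α) (d2 : dzb ≤ α) (h1 : 0 ≤ dzx) (h2 : 0 ≤ dzb) :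
    nzm^2 ≤ α^2 - δ^2/4 := by nlinarith

private lemma aux_key1 {R t δ wb wm ip : ℝ} (h1 : R ≤ wb) (hR : 0 ≤ R)
    (h2 : wb^2 = wm^2 + 2*ip + (δ/2)^2) (h3 : wm^2 ≤ (R-t)^2) (hip : ip ≤ 0) :
    R^2 ≤ (R-t)^2 + δ^2/4 := by nlinarith

private lemma aux_sq_lt {δ ρ R : ℝ} (h : δ^2/4 ≤ ρ^2) (hρ : 0 ≤ ρ) (hρR : ρ < R) :
    0 ≤ R^2 - δ^2/4 := by nlinarith

private lemma aux_h9 {s1 s2 R α u : ℝ} (hs1 : s1^2 = R^2 - u) (hs2 : s2^2 = α^2 - u)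
    (hs2α : s2 ≤ α) (hRα : α ≤ R) (hs2n : 0 ≤ s2) : (s2 + (R - α))^2 ≤ s1^2 := by
  nlinarith [mul_nonneg (sub_nonneg.2 hRα) (sub_nonneg.2 hs2α)]

private lemma aux_h12 {s1 dy R ρ u : ℝ} (hs1 : s1^2 = R^2 - u) (hdy : dy^2 = ρ^2 - u)
    (hdyρ : dy < ρ) (hρR : ρ < R) (hdyn : 0 ≤ dy) : ((R - ρ) + dy)^2 < s1^2 := by
  nlinarith [mul_pos (sub_pos.2 hρR) (sub_pos.2 hdyρ)]

/-- The reach of a set `X`: the supremum of all `r ≥ 0` such that every point `y`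
with `dist (y, X) < r` has a unique nearest point in `X`. -/
noncomputable def reach {d : ℕ} (X : Set (EuclideanSpace ℝ (Fin d))) : ℝ≥0∞ :=
  sSup {r : ℝ≥0∞ | ∀ y : EuclideanSpace ℝ (Fin d),
    ENNReal.ofReal (Metric.infDist y X) < r →
      ∃! x, x ∈ X ∧ ∀ x' ∈ X, dist y x ≤ dist y x'}

theorem stmt_0 {d : ℕ} (A : Set (EuclideanSpace ℝ (Fin d)))
    (hA : A.Nonempty) (hAc : IsCompact A)
    (z : EuclideanSpace ℝ (Fin d)) (α : ℝ) (hα0 : 0 ≤ α)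
    (hα : ENNReal.ofReal α < reach A)
    (hne : (A ∩ Metric.closedBall z α).Nonempty) :
    reach A ≤ reach (A ∩ Metric.closedBall z α) := by
  classical
  set B := A ∩ Metric.closedBall z α with hBdef
  have hBc : IsCompact B := hAc.inter_right Metric.isClosed_closedBall
  rw [show reach A = sSup {r : ℝ≥0∞ | ∀ y : EuclideanSpace ℝ (Fin d),
      ENNReal.ofReal (Metric.infDist y A) < r →
        ∃! x, x ∈ A ∧ ∀ x' ∈ A, dist y x ≤ dist y x'} from rfl,
    show reach B = sSup {r : ℝ≥0∞ | ∀ y : EuclideanSpace ℝ (Fin d),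
      ENNReal.ofReal (Metric.infDist y B) < r →
        ∃! x, x ∈ B ∧ ∀ x' ∈ B, dist y x ≤ dist y x'} from rfl]
  refine sSup_le fun r hr => le_sSup ?_
  intro y hy
  obtain ⟨b0, hb0B, hb0d⟩ := hBc.exists_infDist_eq_dist hne y
  refine ⟨b0, ⟨hb0B, (reach_nearest_iff hne hb0B).2 hb0d.symm⟩, ?_⟩
  rintro x1 ⟨hx1B, hx1min⟩
  by_contra hne10
  -- two distinct nearest points x1 ≠ b0 in B
  set ρ := infDist y B with hρdef
  have hρ0 : 0 ≤ ρ := infDist_nonneg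
  have hρ1 : dist y x1 = ρ := (reach_nearest_iff hne hx1B).1 hx1min
  have hρ2 : dist y b0 = ρ := hb0d.symm
  set δ := dist x1 b0 with hδdef
  have hδ0 : 0 < δ := dist_pos.2 hne10
  set mp : EuclideanSpace ℝ (Fin d) := (2:ℝ)⁻¹ • (x1 + b0) with hmpdef
  have hid : ∀ p : EuclideanSpace ℝ (Fin d), p - mp = (2:ℝ)⁻¹ • ((p - x1) + (p - b0)) := by
    intro p; rw [hmpdef]; module
  have hmidd : ∀ p : EuclideanSpace ℝ (Fin d),
      ‖p - mp‖^2 = ((dist p x1)^2 + (dist p b0)^2)/2 - δ^2/4 := by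
    intro p
    have ha : x1 - b0 = (p - b0) - (p - x1) := by abel
    have h1 : ‖p - mp‖^2 = (4:ℝ)⁻¹ * ‖(p - x1) + (p - b0)‖^2 := by
      rw [hid p, norm_smul, Real.norm_eq_abs, abs_of_nonneg (by norm_num : (0:ℝ) ≤ 2⁻¹), mul_pow]
      norm_num
    have h2 := norm_add_sq_real (p - x1) (p - b0)
    have h3 : δ^2 = ‖(p - b0) - (p - x1)‖^2 := by rw [hδdef, dist_eq_norm, ha]
    rw [norm_sub_sq_real] at h3
    rw [real_inner_comm (p - x1) (p - b0)] at h3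
    rw [h1, h2, dist_eq_norm p x1, dist_eq_norm p b0]
    linarith
  have hy_mp : ‖y - mp‖^2 = ρ^2 - δ^2/4 := by rw [hmidd y, hρ1, hρ2]; ring
  have hz_mp : ‖z - mp‖^2 ≤ α^2 - δ^2/4 := by
    have h1 := hmidd z
    have d1 : dist z x1 ≤ α := by rw [dist_comm]; exact mem_closedBall.1 hx1B.2
    have d2 : dist z b0 ≤ α := by rw [dist_comm]; exact mem_closedBall.1 hb0B.2
    exact aux_zmp h1 d1 d2 dist_nonneg dist_nonneg
  have hu4ρ : δ^2/4 ≤ ρ^2 := by linarith [sq_nonneg ‖y - mp‖, hy_mp]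
  have hu4α : δ^2/4 ≤ α^2 := by linarith [sq_nonneg ‖z - mp‖, hz_mp]
  have hδ2ρ : δ/2 ≤ ρ := aux_half_le hδ0.le hρ0 hu4ρ
  have hρpos : 0 < ρ := by linarith
  -- pick r'' ∈ S_A and a real R' with max(ρ, α) < R', ofReal R' < r''
  have hρA : ENNReal.ofReal ρ < reach A := lt_of_lt_of_le hy (le_sSup hr)
  have hmax2 : max (ENNReal.ofReal ρ) (ENNReal.ofReal α) < reach A := max_lt hρA hα
  rw [show reach A = sSup {r : ℝ≥0∞ | ∀ y : EuclideanSpace ℝ (Fin d),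
      ENNReal.ofReal (Metric.infDist y A) < r →
        ∃! x, x ∈ A ∧ ∀ x' ∈ A, dist y x ≤ dist y x'} from rfl] at hmax2
  obtain ⟨r'', hr''mem, hr''gt⟩ := lt_sSup_iff.1 hmax2
  obtain ⟨R', _, hR'lo, hR'hi⟩ := ENNReal.lt_iff_exists_real_btwn.1 hr''gt
  have hR'α : α < R' := (ENNReal.ofReal_lt_ofReal_iff_of_nonneg hα0).1
    (lt_of_le_of_lt (le_max_right _ _) hR'lo)
  have hR'ρ : ρ < R' := (ENNReal.ofReal_lt_ofReal_iff_of_nonneg hρ0).1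
    (lt_of_le_of_lt (le_max_left _ _) hR'lo)
  have hR'pos : 0 < R' := lt_of_le_of_lt hα0 hR'α
  -- midpoint distances
  have hdmx1 : dist mp x1 = δ/2 := by
    have h := hid x1
    rw [sub_self, zero_add] at h
    rw [dist_comm, dist_eq_norm, h, norm_smul, Real.norm_eq_abs,
      abs_of_nonneg (by norm_num : (0:ℝ) ≤ 2⁻¹), ← dist_eq_norm, ← hδdef]
    ring
  have hdmb0 : dist mp b0 = δ/2 := by
    have h := hid b0
    rw [sub_self, add_zero] at h
    rw [dist_comm, dist_eq_norm, h, norm_smul, Real.norm_eq_abs,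
      abs_of_nonneg (by norm_num : (0:ℝ) ≤ 2⁻¹), ← dist_eq_norm, dist_comm b0 x1, ← hδdef]
    ring
  set t := infDist mp A with htdef
  have ht0 : 0 ≤ t := infDist_nonneg
  have htδ : t ≤ δ/2 := hdmx1 ▸ infDist_le_dist_of_mem hx1B.1
  have htR' : t < R' := lt_of_le_of_lt (htδ.trans hδ2ρ) hR'ρ
  set dy := dist y mp with hdydef
  have hdy2 : dy^2 = ρ^2 - δ^2/4 := by rw [hdydef, dist_eq_norm]; exact hy_mp
  have hdyρ : dy < ρ := aux_dy_lt dist_nonneg hρ0 hδ0 hdy2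
  rcases eq_or_lt_of_le ht0 with ht0eq | ht0pos
  · -- midpoint already in A
    have hmpA : mp ∈ A := (hAc.isClosed.mem_iff_infDist_zero hA).2 ht0eq.symm
    have hmpz : dist mp z ≤ α := by
      have h1 : (dist mp z)^2 ≤ α^2 - δ^2/4 := by
        rw [dist_eq_norm, norm_sub_rev]; exact hz_mp
      exact aux_le_of_sq_le_sq dist_nonneg hα0 (by linarith [h1, hu4α, sq_nonneg δ, hδ0])
    have hmpB : mp ∈ B := ⟨hmpA, mem_closedBall.2 hmpz⟩
    have : ρ ≤ dist y mp := infDist_le_dist_of_mem hmpB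
    linarith
  · obtain ⟨w, hw1, hw2⟩ := reach_exists_far_point hAc hA hr''mem mp R' ht0pos htR' hR'hi
    obtain ⟨a, haA, had⟩ := hAc.exists_infDist_eq_dist hA mp
    have hkey : ∀ b : EuclideanSpace ℝ (Fin d), b ∈ B → dist y b = ρ → dist mp b = δ/2 →
        ⟪w - mp, mp - b⟫ ≤ 0 → False := by
      intro b hbB hbρ hbδ hcip
      have h1 : R' ≤ dist w b := le_trans hw2 (infDist_le_dist_of_mem hbB.1)
      have h2 : (dist w b)^2 = ‖w - mp‖^2 + 2*⟪w - mp, mp - b⟫ + ‖mp - b‖^2 := by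
        have hsp : w - b = (w - mp) + (mp - b) := by abel
        rw [dist_eq_norm, hsp, norm_add_sq_real]
      have h3 : ‖w - mp‖ ≤ R' - t := by rw [← dist_eq_norm]; exact hw1
      have h4 : ‖mp - b‖ = δ/2 := by rw [← dist_eq_norm]; exact hbδ
      have hkey1 : R'^2 ≤ (R' - t)^2 + δ^2/4 := by
        have h5 : ‖w - mp‖^2 ≤ (R'-t)^2 := pow_le_pow_left₀ (norm_nonneg _) h3 2
        have h6 : R'^2 ≤ (dist w b)^2 := pow_le_pow_left₀ hR'pos.le h1 2
        rw [h2, h4] at h6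
        exact aux_key1 h1 hR'pos.le (by rw [h2, h4]) h5 hcip
      set s1 := Real.sqrt (R'^2 - δ^2/4) with hs1
      set s2 := Real.sqrt (α^2 - δ^2/4) with hs2
      have hs1def : s1^2 = R'^2 - δ^2/4 := Real.sq_sqrt (aux_sq_lt hu4ρ hρ0 hR'ρ)
      have hs2def : s2^2 = α^2 - δ^2/4 := Real.sq_sqrt (by linarith)
      have hs1n : 0 ≤ s1 := Real.sqrt_nonneg _
      have hs2n : 0 ≤ s2 := Real.sqrt_nonneg _
      have hts1 : t ≤ R' - s1 := by
        have h6 : s1 ≤ R' - t := by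
          rw [show R' - t = Real.sqrt ((R'-t)^2) from (Real.sqrt_sq (by linarith)).symm, hs1]
          exact Real.sqrt_le_sqrt (by linarith)
        linarith
      have hs2α : s2 ≤ α := by
        rw [show α = Real.sqrt (α^2) from (Real.sqrt_sq hα0).symm, hs2]
        exact Real.sqrt_le_sqrt (by linarith [sq_nonneg δ, mul_pos hδ0 hδ0, sq_nonneg (δ/2)])
      -- a belongs to B
      have hdza : dist a z ≤ α := by
        have h7 : dist mp z ≤ s2 := by
          have h7a : (dist mp z)^2 ≤ α^2 - δ^2/4 := by
            rw [dist_eq_norm, norm_sub_rev]; exact hz_mp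
          calc dist mp z = Real.sqrt ((dist mp z)^2) := (Real.sqrt_sq dist_nonneg).symm
            _ ≤ s2 := by rw [hs2]; exact Real.sqrt_le_sqrt h7a
        have h8 : dist a mp = t := by rw [dist_comm]; exact had.symm
        have h9 : (s2 + (R' - α))^2 ≤ s1^2 := aux_h9 hs1def hs2def hs2α hR'α.le hs2n
        have h10 : s2 + (R' - α) ≤ s1 := by
          calc s2 + (R'-α) = Real.sqrt ((s2 + (R'-α))^2) :=
                (Real.sqrt_sq (by linarith)).symm
            _ ≤ Real.sqrt (s1^2) := Real.sqrt_le_sqrt h9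
            _ = s1 := Real.sqrt_sq hs1n
        calc dist a z ≤ dist a mp + dist mp z := dist_triangle _ _ _
          _ ≤ t + s2 := by linarith
          _ ≤ (R' - s1) + s2 := by linarith
          _ ≤ α := by linarith
      have hya : dist y a < ρ := by
        have h11 : dist y a ≤ dy + t := by
          calc dist y a ≤ dist y mp + dist mp a := dist_triangle _ _ _
            _ = dy + t := by rw [← hdydef, ← had]
        have h12 : ((R' - ρ) + dy)^2 < s1^2 := aux_h12 hs1def hdy2 hdyρ hR'ρ dist_nonneg
        have h13 : (R' - ρ) + dy < s1 := by
          have h13a : 0 ≤ (R' - ρ) + dy := by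
            have := dist_nonneg (x := y) (y := mp); rw [← hdydef] at this; linarith
          calc (R'-ρ) + dy = Real.sqrt (((R'-ρ)+dy)^2) := (Real.sqrt_sq h13a).symm
            _ < Real.sqrt (s1^2) := Real.sqrt_lt_sqrt (sq_nonneg _) h12
            _ = s1 := Real.sqrt_sq hs1n
        linarith
      have : ρ ≤ dist y a := infDist_le_dist_of_mem ⟨haA, mem_closedBall.2 hdza⟩
      linarith
    have hsum : ⟪w - mp, mp - x1⟫ + ⟪w - mp, mp - b0⟫ = 0 := by
      rw [← inner_add_right]
      have hz0 : (mp - x1) + (mp - b0) = (0:EuclideanSpace ℝ (Fin d)) := by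
        rw [hmpdef]; module
      rw [hz0, inner_zero_right]
    rcases le_total (⟪w - mp, mp - x1⟫ : ℝ) 0 with hc | hc
    · exact hkey x1 hx1B hρ1 hdmx1 hc
    · exact hkey b0 hb0B hρ2 hdmb0 (by linarith)
end

section
/- Let (A_n)_{n ∈ ℕ} be a sequence of nonempty compact subsets of ℝ^d that is decreasing with respect to inclusion (A_{n+1} ⊆ A_n for all n). If there exists a real number r ≥ 0 such that r ≤ reach(A_n) for all n ∈ ℕ, then r ≤ reach(⋂_{n ∈ ℕ} A_n). -/
open Metric Set ENNReal

/-!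
Let `K = ⋂ n, A n`, let `δ = infDist y K < r` and let `z, z'` be nearest points of `y` in `K`.
The distances `δₙ = infDist y (A n)` increase to `δ`. Fix a small `t > 0`. Maximising
`c ↦ infDist c (A n) - ‖c - y‖² / (2t)` gives a point `c` where the nearest point `b` in `A n` is
unique (as `reach (A n) ≥ r`); the first-order condition at `c`, which uses the continuity of
the nearest-point map at `c`, forces `c - y` to be the vector of length `t` along `c - b`, so
that the open ball of radius `δₙ + t` around `c` misses `A n`. Hence `z` and `z'` lie on the
sphere of radius `δ` around `y` but outside this ball, which contains the ball of radius `δₙ`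
around `y`; that part of the sphere shrinks to a point as `δₙ → δ`, so `z = z'`.
-/

open Filter Topology

section MetricSpace

variable {α : Type*} [MetricSpace α]

theorem tendsto_nearest_of_unique {X : Set α} (hX : IsCompact X) {p : α → α}
    (hpX : ∀ c, p c ∈ X) (hp : ∀ c, dist c (p c) = infDist c X) {c b : α}
    (huniq : ∀ b' ∈ X, dist c b' = infDist c X → b' = b) :
    Tendsto p (𝓝 c) (𝓝 b) := by
  refine hX.tendsto_nhds_of_unique_mapClusterPt (Eventually.of_forall hpX) fun x hx hcl => ?_
  obtain ⟨U, hU, hpU⟩ := mapClusterPt_iff_ultrafilter.1 hcl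
  refine huniq x hx (tendsto_nhds_unique ?_ (((continuous_infDist_pt X).tendsto c).mono_left hU))
  simpa only [id, hp] using (tendsto_id.mono_left hU).dist hpU

theorem tendsto_infDist_iInter {A : ℕ → Set α} (hA : Antitone A) (hc : ∀ n, IsCompact (A n))
    (hne : ∀ n, (A n).Nonempty) (y : α) :
    Tendsto (fun n => infDist y (A n)) atTop (𝓝 (infDist y (⋂ n, A n))) := by
  have hKne : (⋂ n, A n).Nonempty :=
    IsCompact.nonempty_iInter_of_sequence_nonempty_isCompact_isClosed A (fun n => hA n.le_succ)
      hne (hc 0) fun n => (hc n).isClosed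
  have hmono : Monotone fun n => infDist y (A n) :=
    fun m n hmn => infDist_le_infDist_of_subset (hA hmn) (hne n)
  have hbdd : ∀ n, infDist y (A n) ≤ infDist y (⋂ n, A n) :=
    fun n => infDist_le_infDist_of_subset (iInter_subset A n) hKne
  convert tendsto_atTop_ciSup hmono ⟨_, forall_mem_range.2 hbdd⟩ using 2
  refine le_antisymm ?_ (ciSup_le hbdd)
  -- Cantor's intersection theorem applied to `A n ∩ closedBall y s`
  set s := ⨆ n, infDist y (A n)
  obtain ⟨z, hz⟩ : (⋂ n, A n ∩ closedBall y s).Nonempty := by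
    refine IsCompact.nonempty_iInter_of_sequence_nonempty_isCompact_isClosed _
      (fun n => inter_subset_inter_left _ (hA n.le_succ)) (fun n => ?_)
      ((hc 0).inter_right isClosed_closedBall) fun n => (hc n).isClosed.inter isClosed_closedBall
    obtain ⟨a, ha, hya⟩ := (hc n).exists_infDist_eq_dist (hne n) y
    exact ⟨a, ha, mem_closedBall'.2 (hya ▸ le_ciSup ⟨_, forall_mem_range.2 hbdd⟩ n)⟩
  simp only [mem_iInter, mem_inter_iff] at hz
  exact (infDist_le_dist_of_mem (mem_iInter.2 fun n => (hz n).1)).trans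
    (mem_closedBall'.1 (hz 0).2)

end MetricSpace

theorem exists_isMaxOn_sub_norm_sub_sq {E : Type*} [NormedAddCommGroup E] [ProperSpace E]
    {f : E → ℝ} (hf : LipschitzWith 1 f) (y : E) {t : ℝ} (ht : 0 < t) :
    ∃ c₀, IsMaxOn (fun c => f c - ‖c - y‖ ^ 2 / (2 * t)) univ c₀ := by
  have hcont : Continuous fun c => f c - ‖c - y‖ ^ 2 / (2 * t) := by
    have := hf.continuous; fun_prop
  obtain ⟨c₀, -, hc₀⟩ := (isCompact_closedBall y (2 * t)).exists_isMaxOn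
    ⟨y, mem_closedBall_self (by positivity)⟩ hcont.continuousOn
  refine ⟨c₀, isMaxOn_univ_iff.2 fun c => ?_⟩
  by_cases hc : c ∈ closedBall y (2 * t)
  · exact hc₀ hc
  refine le_trans ?_ (hc₀ (mem_closedBall_self (by positivity)))
  have hρ : 2 * t < ‖c - y‖ := by simpa [dist_eq_norm] using hc
  have hfc : f c ≤ f y + ‖c - y‖ := by
    have := hf.dist_le_mul c y
    rw [NNReal.coe_one, one_mul, Real.dist_eq, dist_eq_norm] at this
    linarith [le_abs_self (f c - f y)]
  have : ‖c - y‖ ≤ ‖c - y‖ ^ 2 / (2 * t) := by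
    rw [le_div_iff₀ (by positivity)]; nlinarith
  show _ ≤ f y - ‖y - y‖ ^ 2 / (2 * t)
  rw [sub_self, norm_zero, zero_pow two_ne_zero, zero_div, sub_zero]
  linarith

section InnerProductSpace

variable {E : Type*} [NormedAddCommGroup E] [InnerProductSpace ℝ E]

theorem norm_sub_le_of_isMaxOn_sub_norm_sub_sq {f : E → ℝ} (hf : LipschitzWith 1 f)
    {y c₀ : E} {t : ℝ} (ht : 0 < t)
    (hmax : IsMaxOn (fun c => f c - ‖c - y‖ ^ 2 / (2 * t)) univ c₀) :
    ‖c₀ - y‖ ≤ t := by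
  by_contra! hL
  set L := ‖c₀ - y‖
  have hL0 : 0 < L := ht.trans hL
  set c := y + (t / L) • (c₀ - y)
  have hcy : ‖c - y‖ = t := by
    rw [add_sub_cancel_left, norm_smul, Real.norm_eq_abs, abs_of_pos (by positivity)]
    exact div_mul_cancel₀ t hL0.ne'
  have hcc₀ : dist c c₀ = L - t := by
    have : c - c₀ = (t / L - 1) • (c₀ - y) := by simp only [c, sub_smul, one_smul]; abel
    rw [dist_eq_norm, this, norm_smul, Real.norm_eq_abs, abs_of_neg]
    · field_simp; ring
    · rw [sub_neg, div_lt_one hL0]; exact hL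
  have hfc : f c₀ - (L - t) ≤ f c := by
    have := hf.dist_le_mul c c₀
    rw [NNReal.coe_one, one_mul, hcc₀, Real.dist_eq] at this
    linarith [neg_abs_le (f c - f c₀)]
  have hmaxc := isMaxOn_univ_iff.1 hmax c
  simp only [hcy] at hmaxc
  have : t ^ 2 / (2 * t) = L ^ 2 / (2 * t) - (L - t) - (L - t) ^ 2 / (2 * t) := by
    field_simp; ring
  have : 0 < (L - t) ^ 2 / (2 * t) := by have := sub_pos.2 hL; positivity
  linarith

theorem le_norm_add_smul_sub_sq {c b b' : E} (hb' : ‖c - b‖ ≤ ‖c - b'‖) {η : ℝ} (hη : 0 ≤ η) :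
    (1 + η) ^ 2 * ‖c - b‖ ^ 2 - η * ‖b' - b‖ ^ 2 ≤ ‖c + η • (c - b) - b'‖ ^ 2 := by
  have h₁ : c - b' = (c - b) - (b' - b) := by abel
  have h₂ : c + η • (c - b) - b' = (1 + η) • (c - b) - (b' - b) := by
    rw [add_smul, one_smul]; abel
  have hsq := pow_le_pow_left₀ (norm_nonneg _) hb' 2
  rw [h₁] at hsq
  rw [h₂]
  generalize c - b = u at *
  generalize b' - b = w at *
  rw [norm_sub_sq_real] at hsq
  rw [norm_sub_sq_real, norm_smul, inner_smul_left, Real.norm_eq_abs, RCLike.conj_to_real,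
    mul_pow, sq_abs]
  nlinarith

theorem mul_infDist_le_inner_of_isMaxOn {X : Set E} (hX : IsCompact X) (hXne : X.Nonempty)
    {y c₀ b : E} {t : ℝ} (ht : 0 < t)
    (hmax : IsMaxOn (fun c => infDist c X - ‖c - y‖ ^ 2 / (2 * t)) univ c₀)
    (hD : 0 < infDist c₀ X) (hb : dist c₀ b = infDist c₀ X)
    (huniq : ∀ b' ∈ X, dist c₀ b' = infDist c₀ X → b' = b) :
    t * infDist c₀ X ≤ inner ℝ (c₀ - b) (c₀ - y) := by
  set D := infDist c₀ X
  set P := inner ℝ (c₀ - b) (c₀ - y)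
  choose p hpX hp using fun c => hX.exists_infDist_eq_dist hXne c
  -- Moving `c₀` to `c₀ + η • (c₀ - b)` raises `infDist · X ^ 2` by at least
  -- `2 * η * D ^ 2 - η * m η + O(η ^ 2)`, where `m η → 0` as nearest points move continuously,
  -- while maximality caps the rise at `2 * η * D * P / t + O(η ^ 2)`.
  let m : ℝ → ℝ := fun η => ‖p (c₀ + η • (c₀ - b)) - b‖ ^ 2
  let g : ℝ → ℝ := fun η =>
    (D - (2 * P + η * D ^ 2) / (2 * t)) * (2 * D + η * (D + (2 * P + η * D ^ 2) / (2 * t)))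
  have hm : Tendsto m (𝓝[>] 0) (𝓝 0) := by
    have hcont : Tendsto (fun η : ℝ => c₀ + η • (c₀ - b)) (𝓝 0) (𝓝 c₀) :=
      Continuous.tendsto' (by fun_prop) _ _ (by simp)
    have := (tendsto_nearest_of_unique hX hpX (fun c => (hp c).symm) huniq).comp hcont
    simpa using ((tendsto_sub_nhds_zero_iff.2 this).norm.pow 2).mono_left nhdsWithin_le_nhds
  have hg : Tendsto g (𝓝[>] 0) (𝓝 ((D - P / t) * (2 * D))) :=
    tendsto_nhdsWithin_of_tendsto_nhds
      (Continuous.tendsto' (by fun_prop) _ _ (by simp only [g]; ring))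
  have hgm : ∀ η > 0, g η ≤ m η := by
    intro η hη
    set c := c₀ + η • (c₀ - b)
    have hbD : ‖c₀ - b‖ = D := by rw [← dist_eq_norm, hb]
    have hlow : (1 + η) ^ 2 * D ^ 2 - η * m η ≤ infDist c X ^ 2 := by
      have := le_norm_add_smul_sub_sq (b' := p c)
        (by rw [hbD, ← dist_eq_norm]; exact infDist_le_dist_of_mem (hpX c)) hη.le
      rw [hbD] at this
      rwa [hp c, dist_eq_norm]
    have hup : infDist c X ≤ D + (2 * η * P + η ^ 2 * D ^ 2) / (2 * t) := by
      have hcy : ‖c - y‖ ^ 2 = ‖c₀ - y‖ ^ 2 + 2 * η * P + η ^ 2 * D ^ 2 := by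
        rw [show c - y = (c₀ - y) + η • (c₀ - b) by simp only [c]; abel, norm_add_sq_real,
          inner_smul_right, real_inner_comm, norm_smul, hbD, Real.norm_eq_abs, mul_pow, sq_abs]
        ring
      have : infDist c X - ‖c - y‖ ^ 2 / (2 * t) ≤ D - ‖c₀ - y‖ ^ 2 / (2 * t) :=
        isMaxOn_univ_iff.1 hmax c
      rw [hcy, add_div, add_div] at this
      rw [add_div]
      linarith
    have hsq := pow_le_pow_left₀ infDist_nonneg hup 2
    have : η * g η ≤ η * m η := by
      have : η * g η =
          (1 + η) ^ 2 * D ^ 2 - (D + (2 * η * P + η ^ 2 * D ^ 2) / (2 * t)) ^ 2 := by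
        simp only [g]; ring
      linarith
    exact le_of_mul_le_mul_left this hη
  have := le_of_tendsto_of_tendsto hg hm (eventually_nhdsWithin_of_forall hgm)
  have : D ≤ P / t := by nlinarith
  rwa [le_div_iff₀ ht, mul_comm] at this

theorem exists_dist_eq_and_infDist_add_le [ProperSpace E] {X : Set E} (hX : IsCompact X)
    (hXne : X.Nonempty) {R : ℝ}
    (hunique : ∀ c, infDist c X < R → ∃! b, b ∈ X ∧ ∀ a ∈ X, dist c b ≤ dist c a)
    {y : E} {t : ℝ} (ht : 0 < t) (hty : t ≤ infDist y X) (hR : infDist y X + t < R) :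
    ∃ c, dist c y = t ∧ infDist y X + t ≤ infDist c X := by
  obtain ⟨c₀, hmax⟩ := exists_isMaxOn_sub_norm_sub_sq (lipschitz_infDist_pt X) y ht
  have hL := norm_sub_le_of_isMaxOn_sub_norm_sub_sq (lipschitz_infDist_pt X) ht hmax
  have hy : infDist y X ≤ infDist c₀ X - ‖c₀ - y‖ ^ 2 / (2 * t) := by
    simpa using isMaxOn_univ_iff.1 hmax y
  have hD : 0 < infDist c₀ X := by
    have : 0 ≤ ‖c₀ - y‖ ^ 2 / (2 * t) := by positivity
    linarith
  have hDR : infDist c₀ X < R := by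
    have := infDist_le_infDist_add_dist (s := X) (x := c₀) (y := y)
    rw [dist_eq_norm] at this
    linarith
  obtain ⟨b, ⟨hbX, hbmin⟩, hbuniq⟩ := hunique c₀ hDR
  have hbd : dist c₀ b = infDist c₀ X :=
    le_antisymm ((le_infDist hXne).2 hbmin) (infDist_le_dist_of_mem hbX)
  have hP := mul_infDist_le_inner_of_isMaxOn hX hXne ht hmax hD hbd
    fun b' hb' h => hbuniq b' ⟨hb', fun a ha => h ▸ infDist_le_dist_of_mem ha⟩
  have hbD : ‖c₀ - b‖ = infDist c₀ X := by rw [← dist_eq_norm, hbd]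
  have hCS := real_inner_le_norm (c₀ - b) (c₀ - y)
  rw [hbD] at hCS
  have hLt : ‖c₀ - y‖ = t := le_antisymm hL (le_of_mul_le_mul_right (by linarith) hD)
  rw [hLt] at hy
  have hyb : infDist y X ^ 2 ≤ (infDist c₀ X - t) ^ 2 := by
    have h₁ := pow_le_pow_left₀ infDist_nonneg (infDist_le_dist_of_mem (x := y) hbX) 2
    rw [dist_eq_norm, show y - b = (c₀ - b) - (c₀ - y) by abel, norm_sub_sq_real, hbD, hLt] at h₁
    linarith
  have : t ^ 2 / (2 * t) = t / 2 := by field_simp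
  refine ⟨c₀, by rw [dist_eq_norm, hLt], ?_⟩
  nlinarith

theorem norm_sub_add_smul_sq_le {y c z : E} {t s δ : ℝ} (hcy : dist c y = t) (ht : 0 < t)
    (hs : 0 ≤ s) (hcz : s + t ≤ dist c z) (hz : dist y z = δ) :
    ‖z - y + (δ / t) • (c - y)‖ ^ 2 ≤ (δ - s) * (2 * δ + δ * (δ + s) / t) := by
  rw [dist_eq_norm] at hcy hcz
  rw [dist_comm, dist_eq_norm] at hz
  have hδ : 0 ≤ δ := hz ▸ norm_nonneg _
  have hI : 2 * inner ℝ (z - y) (c - y) ≤ δ ^ 2 - s ^ 2 - 2 * s * t := by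
    have := pow_le_pow_left₀ (by positivity) hcz 2
    rw [show c - z = (c - y) - (z - y) by abel, norm_sub_sq_real, hcy, hz, real_inner_comm] at this
    linarith
  rw [norm_add_sq_real, hz, inner_smul_right, norm_smul, hcy, Real.norm_eq_abs,
    abs_of_nonneg (by positivity)]
  have := mul_le_mul_of_nonneg_left hI (div_nonneg hδ ht.le)
  have : (δ - s) * (2 * δ + δ * (δ + s) / t) =
      2 * δ ^ 2 + δ / t * (δ ^ 2 - s ^ 2 - 2 * s * t) := by
    field_simp; ring
  have : (δ / t * t) ^ 2 = δ ^ 2 := by field_simp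
  nlinarith

theorem dist_sq_le_of_add_le_dist {y c z z' : E} {t s δ : ℝ} (hcy : dist c y = t) (ht : 0 < t)
    (hs : 0 ≤ s) (hcz : s + t ≤ dist c z) (hcz' : s + t ≤ dist c z')
    (hz : dist y z = δ) (hz' : dist y z' = δ) :
    dist z z' ^ 2 ≤ 4 * ((δ - s) * (2 * δ + δ * (δ + s) / t)) := by
  set w := (δ / t) • (c - y)
  have h₁ := norm_sub_add_smul_sq_le hcy ht hs hcz hz
  have h₂ := norm_sub_add_smul_sq_le hcy ht hs hcz' hz'
  have htri : dist z z' ≤ ‖z - y + w‖ + ‖z' - y + w‖ := by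
    rw [dist_eq_norm, show z - z' = (z - y + w) - (z' - y + w) by abel]
    exact norm_sub_le _ _
  have := pow_le_pow_left₀ dist_nonneg htri 2
  nlinarith [sq_nonneg (‖z - y + w‖ - ‖z' - y + w‖)]

theorem eq_of_dist_eq_infDist_iInter [ProperSpace E] {A : ℕ → Set E} (hA : Antitone A)
    (hc : ∀ n, IsCompact (A n)) (hne : ∀ n, (A n).Nonempty) {r : ℝ}
    (hunique : ∀ n c, infDist c (A n) < r → ∃! b, b ∈ A n ∧ ∀ a ∈ A n, dist c b ≤ dist c a)
    {y z z' : E} (hy : infDist y (⋂ n, A n) < r) (hz : z ∈ ⋂ n, A n) (hz' : z' ∈ ⋂ n, A n)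
    (hyz : dist y z = infDist y (⋂ n, A n)) (hyz' : dist y z' = infDist y (⋂ n, A n)) :
    z = z' := by
  have hlim := tendsto_infDist_iInter hA hc hne y
  have hle n : infDist y (A n) ≤ infDist y (⋂ n, A n) :=
    infDist_le_infDist_of_subset (iInter_subset A n) ⟨z, hz⟩
  have hδ₀ := infDist_nonneg (x := y) (s := ⋂ n, A n)
  generalize infDist y (⋂ n, A n) = δ at hy hyz hyz' hlim hle hδ₀
  rcases hδ₀.eq_or_lt with hδ | hδ
  · rw [← hδ] at hyz hyz'
    exact (dist_eq_zero.1 hyz).symm.trans (dist_eq_zero.1 hyz')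
  -- `t` is fixed while `infDist y (A n)` increases to `δ`, which squeezes `z` and `z'` together
  set t := min (δ / 2) ((r - δ) / 2)
  have ht : 0 < t := lt_min (by linarith) (by linarith)
  set F : ℝ → ℝ := fun s => 4 * ((δ - s) * (2 * δ + δ * (δ + s) / t))
  have hF : Tendsto (fun n => F (infDist y (A n))) atTop (𝓝 0) :=
    (Continuous.tendsto' (f := F) (by fun_prop) δ 0 (by simp [F])).comp hlim
  have hev : ∀ᶠ n in atTop, dist z z' ^ 2 ≤ F (infDist y (A n)) := by
    filter_upwards [hlim.eventually (lt_mem_nhds (show t < δ by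
      exact (min_le_left _ _).trans_lt (by linarith)))] with n hn
    obtain ⟨c, hcy, hcA⟩ := exists_dist_eq_and_infDist_add_le (hc n) (hne n) (hunique n) ht hn.le
      (by linarith [hle n, min_le_right (δ / 2) ((r - δ) / 2)])
    exact dist_sq_le_of_add_le_dist hcy ht infDist_nonneg
      (hcA.trans (infDist_le_dist_of_mem (mem_iInter.1 hz n)))
      (hcA.trans (infDist_le_dist_of_mem (mem_iInter.1 hz' n))) hyz hyz'
  have := ge_of_tendsto hF hev
  exact dist_le_zero.1 (by nlinarith [dist_nonneg (x := z) (y := z')])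

theorem existsUnique_nearest_iInter [ProperSpace E] {A : ℕ → Set E} (hA : Antitone A)
    (hc : ∀ n, IsCompact (A n)) (hne : ∀ n, (A n).Nonempty) {r : ℝ}
    (hunique : ∀ n c, infDist c (A n) < r → ∃! b, b ∈ A n ∧ ∀ a ∈ A n, dist c b ≤ dist c a)
    {y : E} (hy : infDist y (⋂ n, A n) < r) :
    ∃! b, b ∈ ⋂ n, A n ∧ ∀ a ∈ ⋂ n, A n, dist y b ≤ dist y a := by
  have hKne : (⋂ n, A n).Nonempty :=
    IsCompact.nonempty_iInter_of_sequence_nonempty_isCompact_isClosed A (fun n => hA n.le_succ)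
      hne (hc 0) fun n => (hc n).isClosed
  have hK : IsCompact (⋂ n, A n) :=
    (hc 0).of_isClosed_subset (isClosed_iInter fun n => (hc n).isClosed) (iInter_subset A 0)
  obtain ⟨z, hz, hyz⟩ := hK.exists_infDist_eq_dist hKne y
  refine ⟨z, ⟨hz, fun a ha => hyz ▸ infDist_le_dist_of_mem ha⟩, fun z' ⟨hz', hz'min⟩ => ?_⟩
  exact eq_of_dist_eq_infDist_iInter hA hc hne hunique hy hz' hz
    (le_antisymm ((le_infDist hKne).2 hz'min) (infDist_le_dist_of_mem hz')) hyz.symm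

end InnerProductSpace

theorem existsUnique_nearest_of_le_reach {d : ℕ} {X : Set (EuclideanSpace ℝ (Fin d))} {r : ℝ}
    (hr : ENNReal.ofReal r ≤ reach X) {y : EuclideanSpace ℝ (Fin d)} (hy : infDist y X < r) :
    ∃! x, x ∈ X ∧ ∀ x' ∈ X, dist y x ≤ dist y x' := by
  obtain ⟨s, hs, hys⟩ :=
    lt_sSup_iff.1 ((ENNReal.ofReal_lt_ofReal_iff'.2 ⟨hy, infDist_nonneg.trans_lt hy⟩).trans_le hr)
  exact hs y hys

theorem ofReal_le_reach {d : ℕ} {X : Set (EuclideanSpace ℝ (Fin d))} {r : ℝ}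
    (h : ∀ y, infDist y X < r → ∃! x, x ∈ X ∧ ∀ x' ∈ X, dist y x ≤ dist y x') :
    ENNReal.ofReal r ≤ reach X :=
  le_sSup fun y hy => h y (ENNReal.ofReal_lt_ofReal_iff'.1 hy).1

theorem stmt_2_general {d : ℕ} (A : ℕ → Set (EuclideanSpace ℝ (Fin d)))
    (hne : ∀ n, (A n).Nonempty) (hc : ∀ n, IsCompact (A n))
    (hdec : ∀ n, A (n + 1) ⊆ A n)
    (r : ℝ) (hr : ∀ n, ENNReal.ofReal r ≤ reach (A n)) :
    ENNReal.ofReal r ≤ reach (⋂ n, A n) :=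
  ofReal_le_reach fun _ hy => existsUnique_nearest_iInter (antitone_nat_of_succ_le hdec) hc hne
    (fun n _ hc => existsUnique_nearest_of_le_reach (hr n) hc) hy

theorem stmt_2 {d : ℕ} (A : ℕ → Set (EuclideanSpace ℝ (Fin d)))
    (hne : ∀ n, (A n).Nonempty) (hc : ∀ n, IsCompact (A n))
    (hdec : ∀ n, A (n + 1) ⊆ A n)
    (r : ℝ) (hr0 : 0 ≤ r) (hr : ∀ n, ENNReal.ofReal r ≤ reach (A n)) :
    ENNReal.ofReal r ≤ reach (⋂ n, A n) :=
  stmt_2_general A hne hc hdec r hr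
end

section
/- Let X ⊆ ℝ^d be a nonempty compact set. If there exist a point c ∈ ℝ^d and a real number ρ ≥ 0 such that X ⊆ closedBall(c, ρ) and ρ < reach(X), then X, endowed with the subspace topology, is a contractible topological space. -/
open Metric Set ENNReal

theorem stmt_5 {d : ℕ} (X : Set (EuclideanSpace ℝ (Fin d)))
    (hX : X.Nonempty) (hXc : IsCompact X)
    (c : EuclideanSpace ℝ (Fin d)) (ρ : ℝ) (hρ0 : 0 ≤ ρ)
    (hXc' : X ⊆ Metric.closedBall c ρ)
    (hρ : ENNReal.ofReal ρ < reach X) :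
    ContractibleSpace X := by
  classical
  obtain ⟨r, hrS, hρr⟩ : ∃ r ∈ {r : ℝ≥0∞ | ∀ y : EuclideanSpace ℝ (Fin d),
      ENNReal.ofReal (Metric.infDist y X) < r →
        ∃! x, x ∈ X ∧ ∀ x' ∈ X, dist y x ≤ dist y x'}, ENNReal.ofReal ρ < r := by
    rw [reach] at hρ
    exact lt_sSup_iff.mp hρ
  -- total nearest-point projection (exists by compactness)
  choose proj hprojX hprojd using fun y => hXc.exists_infDist_eq_dist hX y
  -- uniqueness on the ρ-tube
  have hmem : ∀ y : EuclideanSpace ℝ (Fin d), Metric.infDist y X ≤ ρ →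
      ∀ z, (z ∈ X ∧ ∀ x' ∈ X, dist y z ≤ dist y x') → z = proj y := by
    intro y hy z hz
    have h1 : ENNReal.ofReal (Metric.infDist y X) < r :=
      lt_of_le_of_lt (ENNReal.ofReal_le_ofReal hy) hρr
    exact (hrS y h1).unique hz
      ⟨hprojX y, fun x' hx' => (hprojd y) ▸ Metric.infDist_le_dist_of_mem hx'⟩
  have hprojeq : ∀ x ∈ X, proj x = x := by
    intro x hx
    have hle : Metric.infDist x X ≤ ρ := by
      have h := Metric.infDist_le_dist_of_mem (x := x) hx
      rw [dist_self] at h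
      exact h.trans hρ0
    refine (hmem x hle x ⟨hx, fun x' hx' => ?_⟩).symm
    simpa [dist_self] using dist_nonneg
  -- sequential continuity of proj on the ρ-tube
  have hcont : ∀ (y : ℕ → EuclideanSpace ℝ (Fin d)) (w : EuclideanSpace ℝ (Fin d)),
      (∀ n, Metric.infDist (y n) X ≤ ρ) → Metric.infDist w X ≤ ρ →
      Filter.Tendsto y Filter.atTop (nhds w) →
      Filter.Tendsto (fun n => proj (y n)) Filter.atTop (nhds (proj w)) := by
    intro y w hy hw hty
    apply Filter.tendsto_of_subseq_tendsto
    intro ns hns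
    obtain ⟨z, hzX, ms, hms, hz⟩ := hXc.tendsto_subseq (fun n => hprojX (y (ns n)))
    refine ⟨ms, ?_⟩
    have htyms : Filter.Tendsto (fun n => y (ns (ms n))) Filter.atTop (nhds w) :=
      hty.comp (hns.comp hms.tendsto_atTop)
    have hz' : z = proj w := by
      refine hmem w hw z ⟨hzX, ?_⟩
      have h1 : Filter.Tendsto
          (fun n => dist (y (ns (ms n))) (proj (y (ns (ms n))))) Filter.atTop
          (nhds (dist w z)) := htyms.dist hz
      have h2 : Filter.Tendsto (fun n => Metric.infDist (y (ns (ms n))) X)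
          Filter.atTop (nhds (Metric.infDist w X)) :=
        ((Metric.continuous_infDist_pt X).tendsto w).comp htyms
      have heq : (fun n => dist (y (ns (ms n))) (proj (y (ns (ms n))))) =
          fun n => Metric.infDist (y (ns (ms n))) X := by
        funext n; exact (hprojd _).symm
      rw [heq] at h1
      have hdz : dist w z = Metric.infDist w X := tendsto_nhds_unique h1 h2
      intro x' hx'
      rw [hdz]; exact Metric.infDist_le_dist_of_mem hx'
    rw [hz'] at hz; exact hz
  -- the contraction
  set seg : unitInterval × X → EuclideanSpace ℝ (Fin d) :=
    fun p => (1 - (p.1 : ℝ)) • c + (p.1 : ℝ) • (p.2 : EuclideanSpace ℝ (Fin d)) with hseg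
  have hsegtube : ∀ p : unitInterval × X, Metric.infDist (seg p) X ≤ ρ := by
    rintro ⟨t, x, hx⟩
    have hxc : dist x c ≤ ρ := hXc' hx
    have hdiff : seg (t, ⟨x, hx⟩) - x = (1 - (t : ℝ)) • (c - x) := by
      simp only [hseg]
      module
    have hnorm : dist (seg (t, ⟨x, hx⟩)) x ≤ ρ := by
      rw [dist_eq_norm, hdiff, norm_smul]
      have h1 : |1 - (t : ℝ)| ≤ 1 := by
        rw [abs_le]; constructor <;> [linarith [t.2.2]; linarith [t.2.1]]
      have h2 : ‖c - x‖ ≤ ρ := by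
        rw [← dist_eq_norm]
        rwa [dist_comm] at hxc
      calc |1 - (t : ℝ)| * ‖c - x‖ ≤ 1 * ρ :=
            mul_le_mul h1 h2 (norm_nonneg _) zero_le_one
        _ = ρ := one_mul ρ
    exact (Metric.infDist_le_dist_of_mem hx).trans hnorm
  have hsegcont : Continuous seg := by
    apply Continuous.add
    · exact ((continuous_const.sub (continuous_subtype_val.comp continuous_fst)).smul
        continuous_const)
    · exact ((continuous_subtype_val.comp continuous_fst).smul
        (continuous_subtype_val.comp continuous_snd))
  set F : unitInterval × X → X := fun p => ⟨proj (seg p), hprojX (seg p)⟩ with hF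
  have hFcont : Continuous F := by
    rw [continuous_iff_seqContinuous]
    intro u p hu
    rw [tendsto_subtype_rng]
    have h1 : Filter.Tendsto (fun n => seg (u n)) Filter.atTop (nhds (seg p)) :=
      (hsegcont.tendsto p).comp hu
    exact hcont (fun n => seg (u n)) (seg p) (fun n => hsegtube (u n)) (hsegtube p) h1
  have hF0 : ∀ x : X, F (0, x) = ⟨proj c, hprojX c⟩ := by
    intro x
    simp only [hF, hseg]
    congr 1
    norm_num
  have hF1 : ∀ x : X, F (1, x) = x := by
    intro x
    simp only [hF, hseg]
    ext1
    simp only [Set.Icc.coe_one, sub_self, zero_smul, one_smul, zero_add]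
    exact hprojeq x x.2
  rw [contractible_iff_id_nullhomotopic]
  refine ⟨⟨proj c, hprojX c⟩, ?_⟩
  refine ⟨ContinuousMap.Homotopy.symm ?_⟩
  exact {
    toContinuousMap := ⟨F, hFcont⟩
    map_zero_left := hF0
    map_one_left := hF1 }
end

section
/- Let ε ≥ 0, α ≥ 0 and r > 0 satisfy √2·α < r − ε. Let A ⊆ ℝ^d be a nonempty compact set with reach(A) ≥ r and let P ⊆ ℝ^d be a finite nonempty set with d_H(A, P) ≤ ε. Set β = r − √((r − ε)² − α²). Then for every t ≥ β and every nonempty subset σ ⊆ P: ⋂_{p ∈ σ} closedBall(p, α) ≠ ∅ if and only if A^⊕t ∩ ⋂_{p ∈ σ} closedBall(p, α) ≠ ∅. -/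
/-! Only the forward implication needs work. Take `y` in all the balls; if `dist y A = δ > t`,
let `a` be the nearest point of `y` and `u` the unit normal, so `y = a + δ • u`. Since the reach
is at least `r`, Federer's extension of normals gives `dist (a + r • u) A = r`, hence every
`p ∈ σ` satisfies `dist (a + r • u) p ≥ r - ε`. Along the ray, `s ↦ dist (a + s • u) p ^ 2` is a
monic quadratic; its values at `s = r` (at least `(r - ε) ^ 2`) and at `s = δ` (at most `α ^ 2`)
force its vertex to lie left of the midpoint of `[t, δ]`, so `a + t • u`, which lies in the
`t`-offset, is no farther from `p` than `y`. -/

open Metric Set ENNReal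

open Filter Topology
open scoped RealInnerProductSpace

section MetricSpace

variable {X : Type*} [PseudoMetricSpace X] {A : Set X}

def HasUniqueNearestWithin (A : Set X) (r : ℝ) : Prop :=
  ∀ z, infDist z A < r → ∃! x, x ∈ A ∧ ∀ x' ∈ A, dist z x ≤ dist z x'

lemma HasUniqueNearestWithin.eq_of_dist_eq {r : ℝ} (hU : HasUniqueNearestWithin A r) {z b b' : X}
    (hz : infDist z A < r) (hb : b ∈ A) (hb' : b' ∈ A) (hzb : dist z b = infDist z A)
    (hzb' : dist z b' = infDist z A) : b' = b :=
  (hU z hz).unique ⟨hb', fun _ hx => hzb' ▸ infDist_le_dist_of_mem hx⟩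
    ⟨hb, fun _ hx => hzb ▸ infDist_le_dist_of_mem hx⟩

lemma eventually_forall_nearest_mem_ball (hA : IsCompact A) {z b : X}
    (hb : ∀ b' ∈ A, dist z b' = infDist z A → b' = b) {η : ℝ} (hη : 0 < η) :
    ∀ᶠ w in 𝓝 z, ∀ b' ∈ A, dist w b' = infDist w A → b' ∈ ball b η := by
  have hfar : ∀ b' ∈ A \ ball b η,
      ∀ᶠ q : X × X in 𝓝 (z, b'), infDist q.1 A < dist q.1 q.2 := by
    rintro b' ⟨hb'A, hb'η⟩
    refine ContinuousAt.eventually_lt ((continuous_infDist_pt A).comp continuous_fst).continuousAt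
      continuous_dist.continuousAt ((infDist_le_dist_of_mem hb'A).lt_of_ne fun h => hb'η ?_)
    rw [hb b' hb'A h.symm]
    exact mem_ball_self hη
  filter_upwards [(hA.diff isOpen_ball).eventually_forall_of_forall_eventually
      (P := fun w b' => infDist w A < dist w b') hfar]
    with w hw b' hb'A hwb'
  by_contra hb'η
  exact (hw b' ⟨hb'A, hb'η⟩).ne' hwb'

end MetricSpace

section InnerProductSpace

variable {E : Type*} [NormedAddCommGroup E] [InnerProductSpace ℝ E] {A : Set E}

lemma dist_add_smul_self {u : E} (hu : ‖u‖ = 1) (a : E) (t : ℝ) : dist (a + t • u) a = |t| := by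
  rw [dist_self_add_left, norm_smul, hu, mul_one, Real.norm_eq_abs]

lemma dist_add_smul_sq {u : E} (hu : ‖u‖ = 1) (a p : E) (t : ℝ) :
    dist (a + t • u) p ^ 2 = t ^ 2 - 2 * t * ⟪u, p - a⟫ + ‖p - a‖ ^ 2 := by
  rw [dist_eq_norm, show a + t • u - p = t • u - (p - a) by abel, norm_sub_sq_real, norm_smul,
    real_inner_smul_left, hu, Real.norm_eq_abs, mul_one, sq_abs, mul_assoc]

lemma exists_norm_eq_one_eq_add_smul {z b : E} {s : ℝ} (hs : 0 < s) (hzb : dist z b = s) :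
    ∃ u : E, ‖u‖ = 1 ∧ z = b + s • u := by
  refine ⟨s⁻¹ • (z - b), ?_, ?_⟩
  · rw [norm_smul, ← dist_eq_norm, hzb, norm_inv, Real.norm_of_nonneg hs.le, inv_mul_cancel₀ hs.ne']
  · rw [smul_inv_smul₀ hs.ne', add_sub_cancel]

/-- Nearest points of `b + (s + h) • u` tend to `b` as `h → 0`, so the distance to `A` grows
at rate nearly `1`. -/
lemma eventually_add_mul_le_infDist (hA : IsCompact A) (hAne : A.Nonempty) {b u : E}
    (hu : ‖u‖ = 1) {s c : ℝ} (hs : 0 < s) (hc0 : 0 ≤ c) (hc1 : c < 1)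
    (hbs : infDist (b + s • u) A = s) (hb : ∀ b' ∈ A, dist (b + s • u) b' = s → b' = b) :
    ∀ᶠ h in 𝓝[>] 0, s + c * h ≤ infDist (b + (s + h) • u) A := by
  have hnear := eventually_forall_nearest_mem_ball hA
    (fun b' hb'A h => hb b' hb'A (h.trans hbs)) (η := s * (1 - c))
    (mul_pos hs (sub_pos.2 hc1))
  have hray : Tendsto (fun h : ℝ => b + (s + h) • u) (𝓝[>] 0) (𝓝 (b + s • u)) :=
    ((Continuous.tendsto' (by fun_prop) 0 _ (by simp)).mono_left nhdsWithin_le_nhds)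
  filter_upwards [hray.eventually hnear, self_mem_nhdsWithin] with h hclose (hh : 0 < h)
  obtain ⟨b', hb'A, hb'⟩ := hA.exists_infDist_eq_dist hAne (b + (s + h) • u)
  have hb'b : ⟪u, b' - b⟫ < s * (1 - c) :=
    calc ⟪u, b' - b⟫ ≤ ‖u‖ * ‖b' - b‖ := real_inner_le_norm _ _
      _ = dist b' b := by rw [hu, one_mul, dist_eq_norm]
      _ < s * (1 - c) := mem_ball.1 (hclose b' hb'A hb'.symm)
  have hsb' : s ^ 2 ≤ dist (b + s • u) b' ^ 2 :=
    pow_le_pow_left₀ hs.le (hbs.ge.trans (infDist_le_dist_of_mem hb'A)) 2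
  rw [dist_add_smul_sq hu] at hsb'
  rw [hb', ← pow_le_pow_iff_left₀ (by positivity) dist_nonneg two_ne_zero, dist_add_smul_sq hu]
  nlinarith [mul_pos hh (sub_pos.2 hb'b),
    mul_nonneg (mul_nonneg (sq_nonneg h) (sub_nonneg.2 hc1.le)) (by linarith : (0 : ℝ) ≤ 1 + c)]

/-- Continuous induction on the set of `S ∈ [0, L]` such that some point of `closedBall y S` is at
distance `≥ infDist y A + c * S` from `A`: it is closed as the projection of a compact set, and
open to the right by `eventually_add_mul_le_infDist`. -/
lemma exists_mem_closedBall_add_mul_le_infDist [ProperSpace E] (hA : IsCompact A)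
    (hAne : A.Nonempty) {r : ℝ} (hU : HasUniqueNearestWithin A r) {y : E} {L c : ℝ}
    (hy : 0 < infDist y A) (hL : 0 ≤ L) (hLr : infDist y A + L < r) (hc0 : 0 ≤ c) (hc1 : c < 1) :
    ∃ z ∈ closedBall y L, infDist y A + c * L ≤ infDist z A := by
  set K : Set (ℝ × E) :=
    {q | q.1 ∈ Icc 0 L ∧ dist q.2 y ≤ q.1 ∧ infDist y A + c * q.1 ≤ infDist q.2 A}
  have hK : IsCompact K := by
    refine ((isCompact_Icc (a := 0) (b := L)).prod (isCompact_closedBall y L)).of_isClosed_subset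
      ?_ ?_
    · exact (isClosed_Icc.preimage continuous_fst).inter ((isClosed_le (by fun_prop)
        continuous_fst).inter (isClosed_le (by fun_prop)
          ((continuous_infDist_pt A).comp continuous_snd)))
    · rintro ⟨S, z⟩ ⟨hS, hzS, -⟩
      exact ⟨hS, hzS.trans hS.2⟩
  suffices L ∈ Prod.fst '' K by
    obtain ⟨⟨_, z⟩, ⟨-, hz, hzA⟩, rfl⟩ := this
    exact ⟨z, hz, hzA⟩
  refine ((hK.image continuous_fst).isClosed.inter isClosed_Icc).Icc_subset_of_forall_mem_nhdsWithin
    ⟨(0, y), ⟨⟨le_rfl, hL⟩, by simp, by simp⟩, rfl⟩ ?_ ⟨hL, le_rfl⟩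
  rintro _ ⟨⟨⟨x, z⟩, ⟨-, hzx, hzA⟩, rfl⟩, hx⟩
  set s := infDist z A
  have hzr : s < r := by
    linarith [infDist_le_infDist_add_dist (s := A) (x := z) (y := y), hx.2]
  have hs : 0 < s := by linarith [mul_nonneg hc0 hx.1]
  obtain ⟨b, hbA, hzb⟩ := hA.exists_infDist_eq_dist hAne z
  obtain ⟨u, hu, hzu⟩ := exists_norm_eq_one_eq_add_smul hs hzb.symm
  have hstep := eventually_add_mul_le_infDist hA hAne hu hs hc0 hc1 (by rw [← hzu])
    fun b' hb'A hb' => hU.eq_of_dist_eq hzr hbA hb'A hzb.symm (by rwa [← hzu] at hb')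
  have hshift : Tendsto (fun S => S - x) (𝓝[>] x) (𝓝[>] 0) :=
    tendsto_nhdsWithin_of_tendsto_nhds_of_eventually_within _
      (((continuous_sub_right x).tendsto' x 0 (sub_self x)).mono_left nhdsWithin_le_nhds)
      (eventually_nhdsWithin_of_forall fun _ hS => mem_Ioi.2 (sub_pos.2 hS))
  filter_upwards [hshift.eventually hstep, Ioc_mem_nhdsGT hx.2] with S hS hSL
  have hz' : b + (s + (S - x)) • u = z + (S - x) • u := by rw [hzu, add_smul, add_assoc]
  refine ⟨⟨S, b + (s + (S - x)) • u⟩, ⟨⟨hx.1.trans hSL.1.le, hSL.2⟩, ?_, by linarith⟩, rfl⟩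
  calc dist (b + (s + (S - x)) • u) y ≤ dist (z + (S - x) • u) z + dist z y :=
        hz' ▸ dist_triangle _ _ _
    _ ≤ S := by rw [dist_add_smul_self hu, abs_of_pos (sub_pos.2 hSL.1)]; linarith

/-- A point almost as far from `a` as the triangle inequality through `a + δ • u` allows is close
to the end `a + ρ • u` of the segment. -/
lemma sq_dist_add_smul_le {u : E} (hu : ‖u‖ = 1) {a z : E} {δ ρ c : ℝ} (hδ : 0 < δ) (hδρ : δ ≤ ρ)
    (hc0 : 0 ≤ c) (hc1 : c ≤ 1) (hzy : dist z (a + δ • u) ≤ ρ - δ)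
    (hza : δ + c * (ρ - δ) ≤ dist z a) :
    dist z (a + ρ • u) ^ 2 ≤ (1 - c) * (2 * (ρ - δ) ^ 2 * ρ / δ) := by
  have hy : dist (a + δ • u) z ^ 2 ≤ (ρ - δ) ^ 2 :=
    pow_le_pow_left₀ dist_nonneg (dist_comm z _ ▸ hzy) 2
  have ha : (δ + c * (ρ - δ)) ^ 2 ≤ ‖z - a‖ ^ 2 := by
    rw [← dist_eq_norm]
    exact pow_le_pow_left₀ (by nlinarith) hza 2
  rw [dist_comm, dist_add_smul_sq hu]
  rw [dist_add_smul_sq hu] at hy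
  rw [mul_div_assoc', le_div_iff₀ hδ]
  nlinarith [mul_le_mul_of_nonneg_left hy (by linarith : 0 ≤ ρ),
    mul_le_mul_of_nonneg_left ha (sub_nonneg.2 hδρ),
    mul_nonneg (mul_nonneg (sub_nonneg.2 hc1) (sub_nonneg.2 hc1)) (pow_nonneg (sub_nonneg.2 hδρ) 3)]

/-- Federer's extension of normal segments: let `c → 1` in the two lemmas above. -/
lemma infDist_add_smul_eq_of_lt [ProperSpace E] (hA : IsCompact A) (hAne : A.Nonempty) {r : ℝ}
    (hU : HasUniqueNearestWithin A r) {a u : E} (ha : a ∈ A) (hu : ‖u‖ = 1) {δ ρ : ℝ}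
    (hδ : 0 < δ) (hδA : infDist (a + δ • u) A = δ) (hδρ : δ ≤ ρ) (hρr : ρ < r) :
    infDist (a + ρ • u) A = ρ := by
  refine le_antisymm ((infDist_le_dist_of_mem ha).trans_eq ?_) ?_
  · rw [dist_add_smul_self hu, abs_of_nonneg (hδ.le.trans hδρ)]
  set K := 2 * (ρ - δ) ^ 2 * ρ / δ
  have hbound : ∀ c ∈ Ico (0 : ℝ) 1,
      δ + c * (ρ - δ) - √((1 - c) * K) ≤ infDist (a + ρ • u) A := by
    rintro c ⟨hc0, hc1⟩
    obtain ⟨z, hzy, hzA⟩ := exists_mem_closedBall_add_mul_le_infDist hA hAne hU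
      (y := a + δ • u) (L := ρ - δ) (by rwa [hδA]) (by linarith) (by rw [hδA]; linarith) hc0 hc1
    rw [hδA] at hzA
    have hzρ : dist z (a + ρ • u) ≤ √((1 - c) * K) := Real.le_sqrt_of_sq_le <|
      sq_dist_add_smul_le hu hδ hδρ hc0 hc1.le hzy (hzA.trans (infDist_le_dist_of_mem ha))
    linarith [infDist_le_infDist_add_dist (s := A) (x := z) (y := a + ρ • u)]
  have hlim : Tendsto (fun c => δ + c * (ρ - δ) - √((1 - c) * K)) (𝓝[<] 1) (𝓝 ρ) := by
    have hcont : Continuous fun c : ℝ => δ + c * (ρ - δ) - √((1 - c) * K) := by fun_prop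
    simpa using (hcont.tendsto 1).mono_left nhdsWithin_le_nhds
  exact le_of_tendsto hlim (eventually_of_mem (Ico_mem_nhdsLT one_pos) hbound)

lemma infDist_add_smul_eq [ProperSpace E] (hA : IsCompact A) (hAne : A.Nonempty) {r : ℝ}
    (hU : HasUniqueNearestWithin A r) {a u : E} (ha : a ∈ A) (hu : ‖u‖ = 1) {δ ρ : ℝ}
    (hδ : 0 < δ) (hδA : infDist (a + δ • u) A = δ) (hδρ : δ ≤ ρ) (hρr : ρ ≤ r) :
    infDist (a + ρ • u) A = ρ := by
  obtain rfl | hδρ := hδρ.eq_or_lt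
  · exact hδA
  have hsub : Ico δ r ⊆ {ρ | infDist (a + ρ • u) A = ρ} := fun ρ hρ =>
    infDist_add_smul_eq_of_lt hA hAne hU ha hu hδ hδA hρ.1 hρ.2
  have hclosed : IsClosed {ρ : ℝ | infDist (a + ρ • u) A = ρ} :=
    isClosed_eq ((continuous_infDist_pt A).comp (by fun_prop)) continuous_id
  rw [← hclosed.closure_subset_iff, closure_Ico (hδρ.trans_le hρr).ne] at hsub
  exact hsub ⟨hδρ.le, hρr⟩

lemma dist_add_smul_le_of_sq_le {u : E} (hu : ‖u‖ = 1) (a p : E) {t δ r : ℝ} (htδ : t ≤ δ)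
    (hδr : δ < r) (h : (r - t) ^ 2 ≤ dist (a + r • u) p ^ 2 - dist (a + δ • u) p ^ 2) :
    dist (a + t • u) p ≤ dist (a + δ • u) p := by
  rw [← pow_le_pow_iff_left₀ dist_nonneg dist_nonneg two_ne_zero]
  simp only [dist_add_smul_sq hu] at h ⊢
  have hJ : 2 * ⟪u, p - a⟫ ≤ t + δ := by
    refine le_of_mul_le_mul_right ?_ (sub_pos.2 hδr)
    nlinarith [mul_nonneg (sub_nonneg.2 (htδ.trans hδr.le)) (sub_nonneg.2 htδ)]
  nlinarith [mul_le_mul_of_nonneg_left hJ (sub_nonneg.2 htδ)]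

lemma nonempty_offset_inter_of_nonempty [ProperSpace E] (hA : IsCompact A) (hAne : A.Nonempty) {r : ℝ}
    (hU : HasUniqueNearestWithin A r) {σ : Set E} {ε α t : ℝ} (hσA : ∀ p ∈ σ, infDist p A ≤ ε)
    (hσ : σ.Nonempty) (hαε : α + ε < r) (ht : 0 ≤ t) (hβt : r - √((r - ε) ^ 2 - α ^ 2) ≤ t)
    (hσα : (⋂ p ∈ σ, closedBall p α).Nonempty) :
    ((⋃ x ∈ A, closedBall x t) ∩ ⋂ p ∈ σ, closedBall p α).Nonempty := by
  obtain ⟨y, hy⟩ := hσα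
  simp only [mem_iInter₂, mem_closedBall] at hy
  obtain ⟨a, ha, hya⟩ := hA.exists_infDist_eq_dist hAne y
  obtain ⟨δ, hδ⟩ : ∃ δ, infDist y A = δ := ⟨_, rfl⟩
  rw [hδ] at hya
  rcases le_or_gt δ t with hyt | hyt
  · exact ⟨y, mem_iUnion₂.2 ⟨a, ha, mem_closedBall.2 (hya ▸ hyt)⟩,
      mem_iInter₂.2 fun p hp => mem_closedBall.2 (hy p hp)⟩
  have hδr : δ < r := by
    obtain ⟨p, hp⟩ := hσ
    linarith [hσA p hp, hy p hp, infDist_le_infDist_add_dist (s := A) (x := y) (y := p)]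
  obtain ⟨u, hu, rfl⟩ := exists_norm_eq_one_eq_add_smul (ht.trans_lt hyt) hya.symm
  have hr : infDist (a + r • u) A = r :=
    infDist_add_smul_eq hA hAne hU ha hu (ht.trans_lt hyt) hδ hδr.le le_rfl
  refine ⟨a + t • u, mem_iUnion₂.2 ⟨a, ha, ?_⟩, mem_iInter₂.2 fun p hp => mem_closedBall.2 ?_⟩
  · rw [mem_closedBall, dist_add_smul_self hu, abs_of_nonneg ht]
  have hpα := hy p hp
  have hrp : r - ε ≤ dist (a + r • u) p := by
    linarith [hσA p hp, infDist_le_infDist_add_dist (s := A) (x := a + r • u) (y := p)]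
  have hrt : (r - t) ^ 2 ≤ (r - ε) ^ 2 - α ^ 2 := (Real.le_sqrt' (by linarith)).1 (by linarith)
  refine (dist_add_smul_le_of_sq_le hu a p hyt.le hδr ?_).trans hpα
  nlinarith [pow_le_pow_left₀ (by linarith [dist_nonneg (x := a + δ • u) (y := p)]) hrp 2,
    pow_le_pow_left₀ dist_nonneg hpα 2]

end InnerProductSpace

lemma HasUniqueNearestWithin.of_le_reach {d : ℕ} {A : Set (EuclideanSpace ℝ (Fin d))} {r : ℝ}
    (h : ENNReal.ofReal r ≤ reach A) : HasUniqueNearestWithin A r := by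
  intro z hz
  have hzA : ENNReal.ofReal (infDist z A) < reach A :=
    (ENNReal.ofReal_lt_ofReal_iff'.2 ⟨hz, (infDist_nonneg (x := z)).trans_lt hz⟩).trans_le h
  obtain ⟨s, hs, hzs⟩ := lt_sSup_iff.1 hzA
  exact hs z hzs

theorem stmt_9_general {d : ℕ} (ε α r : ℝ) (hε : 0 ≤ ε) (hα : 0 ≤ α)
    (hcond : Real.sqrt 2 * α < r - ε)
    (A : Set (EuclideanSpace ℝ (Fin d))) (hA : A.Nonempty) (hAc : IsCompact A)
    (hreach : ENNReal.ofReal r ≤ reach A)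
    (P : Set (EuclideanSpace ℝ (Fin d))) (hPf : P.Finite)
    (hH : Metric.hausdorffDist A P ≤ ε) :
    ∀ t : ℝ, r - Real.sqrt ((r - ε) ^ 2 - α ^ 2) ≤ t →
      ∀ σ ⊆ P, σ.Nonempty →
        ((⋂ p ∈ σ, Metric.closedBall p α).Nonempty ↔
          ((⋃ x ∈ A, Metric.closedBall x t) ∩ ⋂ p ∈ σ, Metric.closedBall p α).Nonempty) := by
  intro t ht σ hσP hσ
  have hαε : α + ε < r := by nlinarith [Real.one_lt_sqrt_two]
  have ht0 : 0 ≤ t := by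
    have : √((r - ε) ^ 2 - α ^ 2) ≤ r - ε := Real.sqrt_le_iff.2 ⟨by linarith, by nlinarith⟩
    linarith
  have hσA : ∀ p ∈ σ, infDist p A ≤ ε := fun p hp =>
    (infDist_le_hausdorffDist_of_mem (hσP hp) (hausdorffEDist_ne_top_of_nonempty_of_bounded
      ⟨p, hσP hp⟩ hA hPf.isBounded hAc.isBounded)).trans_eq hausdorffDist_comm |>.trans hH
  exact ⟨nonempty_offset_inter_of_nonempty hAc hA (.of_le_reach hreach) hσA hσ hαε ht0 ht,
    fun ⟨x, hx⟩ => ⟨x, hx.2⟩⟩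

theorem stmt_9 {d : ℕ} (ε α r : ℝ) (hε : 0 ≤ ε) (hα : 0 ≤ α) (hr : 0 < r)
    (hcond : Real.sqrt 2 * α < r - ε)
    (A : Set (EuclideanSpace ℝ (Fin d))) (hA : A.Nonempty) (hAc : IsCompact A)
    (hreach : ENNReal.ofReal r ≤ reach A)
    (P : Set (EuclideanSpace ℝ (Fin d))) (hPne : P.Nonempty) (hPf : P.Finite)
    (hH : Metric.hausdorffDist A P ≤ ε) :
    ∀ t : ℝ, r - Real.sqrt ((r - ε) ^ 2 - α ^ 2) ≤ t →
      ∀ σ ⊆ P, σ.Nonempty →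
        ((⋂ p ∈ σ, Metric.closedBall p α).Nonempty ↔
          ((⋃ x ∈ A, Metric.closedBall x t) ∩ ⋂ p ∈ σ, Metric.closedBall p α).Nonempty) :=
  stmt_9_general ε α r hε hα hcond A hA hAc hreach P hPf hH
end

section
/- Let X ⊆ ℝ^d be a nonempty compact set and let closedBall(c, ρ) be a smallest enclosing ball of X. Then for every point z ∈ ℝ^d and every real number α ≥ ρ, if closedBall(c, α − √(α² − ρ²)) is contained in the open ball of center z and radius α, then X intersects the open ball of center z and radius α. -/
open Metric Set RealInnerProductSpace

/-- `closedBall c ρ` is a smallest enclosing ball of `X`: it contains `X` and every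
closed ball containing `X` has radius at least `ρ`. -/
def IsSmallestEnclosingBall {d : ℕ} (X : Set (EuclideanSpace ℝ (Fin d)))
    (c : EuclideanSpace ℝ (Fin d)) (ρ : ℝ) : Prop :=
  X ⊆ Metric.closedBall c ρ ∧
    ∀ (c' : EuclideanSpace ℝ (Fin d)) (ρ' : ℝ), X ⊆ Metric.closedBall c' ρ' → ρ ≤ ρ'

/-!
Suppose `X` misses `ball z α` and put `β = √(α² - ρ²)`. Every `x ∈ X` is within `ρ` of `c` and
at least `α` away from `z`, so the law of cosines gives `2⟪x - c, c - z⟫ ≥ β² - ‖c - z‖²`. The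
ball inclusion forces `‖c - z‖ < β`, so all of `X` lies uniformly on the far side of `c` in the
direction `c - z`; pushing the centre a little in that direction then yields an enclosing ball of
radius smaller than `ρ`, contradicting minimality.
-/

theorem dist_add_lt_of_closedBall_subset_ball {V P : Type*} [NormedAddCommGroup V]
    [NormedSpace ℝ V] [MetricSpace P] [NormedAddTorsor V P] {c z : P} {r α : ℝ}
    (hr : 0 ≤ r) (hcz : c ≠ z) (h : closedBall c r ⊆ ball z α) : dist c z + r < α := by
  have hD : 0 < dist z c := dist_pos.2 hcz.symm
  -- the point of `closedBall c r` farthest from `z`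
  set p := AffineMap.lineMap z c (1 + r / dist z c)
  have hpc : p ∈ closedBall c r := by
    rw [mem_closedBall, dist_lineMap_right, sub_add_cancel_left, norm_neg, Real.norm_eq_abs,
      abs_div, abs_of_nonneg hr, abs_of_pos hD, div_mul_cancel₀ _ hD.ne']
  have hpz : dist p z = dist c z + r := by
    rw [dist_lineMap_left, Real.norm_eq_abs, abs_of_nonneg (by positivity), add_mul,
      div_mul_cancel₀ _ hD.ne', one_mul, dist_comm]
  simpa only [mem_ball, hpz] using h hpc

section InnerProductSpace

variable {E : Type*} [NormedAddCommGroup E] [InnerProductSpace ℝ E]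

theorem sq_sub_sq_sub_sq_le_two_inner {x c z : E} {ρ α : ℝ} (hα : 0 ≤ α)
    (hxc : dist x c ≤ ρ) (hxz : α ≤ dist x z) :
    α ^ 2 - ρ ^ 2 - dist c z ^ 2 ≤ 2 * ⟪x - c, c - z⟫ := by
  have hcos : dist x z ^ 2 = dist x c ^ 2 + 2 * ⟪x - c, c - z⟫ + dist c z ^ 2 := by
    simp only [dist_eq_norm]
    rw [← norm_add_sq_real, sub_add_sub_cancel]
  nlinarith [dist_nonneg (x := x) (y := c)]

theorem exists_closedBall_radius_lt_of_forall_le_inner {X : Set E} {c v : E} {ρ δ : ℝ}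
    (hX : X ⊆ closedBall c ρ) (hδ : 0 < δ) (hXv : ∀ x ∈ X, δ ≤ ⟪x - c, v⟫) :
    ∃ c' r, X ⊆ closedBall c' r ∧ r < ρ := by
  rcases X.eq_empty_or_nonempty with rfl | ⟨x₀, hx₀⟩
  · exact ⟨c, ρ - 1, empty_subset _, by linarith⟩
  have hv : v ≠ 0 := by
    rintro rfl
    simpa [hδ.not_ge] using hXv x₀ hx₀
  set t := δ / ‖v‖ ^ 2
  have ht : 0 < t := by positivity
  have htv : t * ‖v‖ ^ 2 = δ := div_mul_cancel₀ _ (by positivity)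
  have hshift : ∀ x ∈ X, dist x (c + t • v) ^ 2 ≤ ρ ^ 2 - t * δ := by
    intro x hx
    have hxc : ‖x - c‖ ≤ ρ := by simpa only [mem_closedBall, dist_eq_norm] using hX hx
    have hexp : dist x (c + t • v) ^ 2 =
        ‖x - c‖ ^ 2 - 2 * (t * ⟪x - c, v⟫) + t * (t * ‖v‖ ^ 2) := by
      rw [dist_eq_norm, show x - (c + t • v) = x - c - t • v by abel, norm_sub_sq_real,
        real_inner_smul_right, norm_smul, Real.norm_eq_abs, abs_of_pos ht]
      ring
    have hmul := mul_le_mul_of_nonneg_left (hXv x hx) ht.le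
    nlinarith [norm_nonneg (x - c)]
  have hρ : 0 < ρ := by
    have hρ₀ : 0 ≤ ρ := dist_nonneg.trans (hX hx₀)
    nlinarith [(sq_nonneg _).trans (hshift x₀ hx₀), mul_pos ht hδ]
  refine ⟨c + t • v, √(ρ ^ 2 - t * δ), fun x hx => ?_, ?_⟩
  · exact Real.le_sqrt_of_sq_le (hshift x hx)
  · exact (Real.sqrt_lt' hρ).2 (by nlinarith [mul_pos ht hδ])

end InnerProductSpace

namespace IsSmallestEnclosingBall

variable {d : ℕ} {X : Set (EuclideanSpace ℝ (Fin d))} {c : EuclideanSpace ℝ (Fin d)} {ρ : ℝ}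

theorem nonempty (h : IsSmallestEnclosingBall X c ρ) : X.Nonempty := by
  by_contra hX
  rw [not_nonempty_iff_eq_empty] at hX
  linarith [h.2 c (ρ - 1) (hX ▸ empty_subset _)]

theorem exists_inner_lt (h : IsSmallestEnclosingBall X c ρ) (v : EuclideanSpace ℝ (Fin d))
    {δ : ℝ} (hδ : 0 < δ) : ∃ x ∈ X, ⟪x - c, v⟫ < δ := by
  by_contra! hXv
  obtain ⟨c', r, hXr, hr⟩ := exists_closedBall_radius_lt_of_forall_le_inner h.1 hδ hXv
  exact (h.2 c' r hXr).not_gt hr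

end IsSmallestEnclosingBall

theorem stmt_12_general {d : ℕ} (X : Set (EuclideanSpace ℝ (Fin d)))
    (c : EuclideanSpace ℝ (Fin d)) (ρ : ℝ)
    (hseb : IsSmallestEnclosingBall X c ρ) :
    ∀ (z : EuclideanSpace ℝ (Fin d)) (α : ℝ), ρ ≤ α →
      Metric.closedBall c (α - Real.sqrt (α ^ 2 - ρ ^ 2)) ⊆ Metric.ball z α →
        (X ∩ Metric.ball z α).Nonempty := by
  intro z α hρα hsub
  by_contra hXz
  have hfar : ∀ x ∈ X, α ≤ dist x z := fun x hx => not_lt.1 fun h => hXz ⟨x, hx, h⟩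
  obtain ⟨x₀, hx₀⟩ := hseb.nonempty
  have hρ : 0 ≤ ρ := dist_nonneg.trans (hseb.1 hx₀)
  set β := √(α ^ 2 - ρ ^ 2)
  have hβsq : β ^ 2 = α ^ 2 - ρ ^ 2 := Real.sq_sqrt (by nlinarith)
  have hβα : β ≤ α := by nlinarith [Real.sqrt_nonneg (α ^ 2 - ρ ^ 2)]
  have hcz : c ≠ z := by
    rintro rfl
    have hαρ : ρ = α := le_antisymm hρα ((hfar x₀ hx₀).trans (hseb.1 hx₀))
    have hβ : β = 0 := by simp [β, hαρ]
    have hx₀c : x₀ ∈ closedBall c (α - β) := by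
      simpa only [mem_closedBall, hβ, sub_zero, hαρ] using hseb.1 hx₀
    exact (hfar x₀ hx₀).not_gt (hsub hx₀c)
  have hD : dist c z < β := by
    linarith [dist_add_lt_of_closedBall_subset_ball (sub_nonneg.2 hβα) hcz hsub]
  have hδ : 0 < (β ^ 2 - dist c z ^ 2) / 2 := by nlinarith [dist_nonneg (x := c) (y := z)]
  obtain ⟨x, hx, hlt⟩ := hseb.exists_inner_lt (c - z) hδ
  linarith [sq_sub_sq_sub_sq_le_two_inner (hρ.trans hρα) (hseb.1 hx) (hfar x hx)]

theorem stmt_12 {d : ℕ} (X : Set (EuclideanSpace ℝ (Fin d)))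
    (hX : X.Nonempty) (hXc : IsCompact X)
    (c : EuclideanSpace ℝ (Fin d)) (ρ : ℝ)
    (hseb : IsSmallestEnclosingBall X c ρ) :
    ∀ (z : EuclideanSpace ℝ (Fin d)) (α : ℝ), ρ ≤ α →
      Metric.closedBall c (α - Real.sqrt (α ^ 2 - ρ ^ 2)) ⊆ Metric.ball z α →
        (X ∩ Metric.ball z α).Nonempty :=
  stmt_12_general X c ρ hseb
end

section
/- Let X ⊆ ℝ^d be a nonempty compact set, let closedBall(c, ρ) be a smallest enclosing ball of X, and let α and δ be real numbers with α ≥ ρ and α − √(α² − ρ²) ≤ δ. Then the α-hull of X is contained in the δ-offset of the convex hull of X: ⋂_{z ∈ ℝ^d, X ⊆ closedBall(z, α)} closedBall(z, α) ⊆ (convexHull X)^⊕δ. -/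
/-!
Let `q` be the point of `conv X` nearest to a point `p` of the `α`-hull (it exists because `conv X`
is compact), and `u` the unit vector from `q` to `p`, so that `X` lies in the half-space
`⟪u, ·⟫ ≤ ⟪u, q⟫`. Pushing the centre of `B(c, ρ)` backwards along `u` far enough gives a ball of
radius `α` that still contains `X` but reaches at most `α - √(α² - ρ²)` beyond that half-space.
As `p` lies in this ball, `‖p - q‖ ≤ α - √(α² - ρ²) ≤ δ`.
-/
open Metric Set

open RealInnerProductSpace

theorem IsCompact.convexHull_of_finiteDimensional {E : Type*} [NormedAddCommGroup E]
    [NormedSpace ℝ E] [FiniteDimensional ℝ E] {X : Set E} (hX : IsCompact X) :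
    IsCompact (convexHull ℝ X) := by
  -- Carathéodory: every point of the hull is a convex combination of at most `finrank + 1` points.
  have hunion : convexHull ℝ X = ⋃ k ∈ Finset.range (Module.finrank ℝ E + 2),
      (fun p : (Fin k → ℝ) × (Fin k → E) => ∑ i, p.1 i • p.2 i) ''
        (stdSimplex ℝ (Fin k) ×ˢ univ.pi fun _ => X) := by
    refine Subset.antisymm (fun x hx => ?_) ?_
    · obtain ⟨ι, _, z, w, hzX, hz, hw0, hw1, rfl⟩ := eq_pos_convex_span_of_mem_convexHull hx
      have hcard : Fintype.card ι < Module.finrank ℝ E + 2 := by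
        have := Submodule.finrank_le (vectorSpan ℝ (range z))
        have := hz.card_le_finrank_succ
        omega
      let e := Fintype.equivFin ι
      refine mem_biUnion (Finset.mem_range.2 hcard) ⟨(w ∘ e.symm, z ∘ e.symm), ?_, ?_⟩
      · refine ⟨⟨fun i => (hw0 _).le, ?_⟩, fun i _ => hzX (mem_range_self _)⟩
        simpa only [Function.comp_apply, e.symm.sum_comp] using hw1
      · exact e.symm.sum_comp fun i => w i • z i
    · refine iUnion₂_subset fun k _ => ?_
      rintro _ ⟨⟨w, z⟩, ⟨hw, hz⟩, rfl⟩
      exact (convex_convexHull ℝ X).sum_mem (fun i _ => hw.1 i) hw.2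
        fun i _ => subset_convexHull ℝ X (hz i (mem_univ i))
  rw [hunion]
  exact (Finset.range _).isCompact_biUnion fun k _ =>
    ((isCompact_stdSimplex ℝ (Fin k)).prod (isCompact_univ_pi fun _ => hX)).image (by fun_prop)

section InnerProductSpace

variable {E : Type*} [NormedAddCommGroup E] [InnerProductSpace ℝ E]

theorem closedBall_inter_setOf_inner_le_subset_closedBall {c u : E} {ρ α β τ : ℝ}
    (hu : ‖u‖ = 1) (hτ : 0 ≤ τ) (hτβ : τ * (τ + 2 * β) ≤ α ^ 2 - ρ ^ 2) (hα : 0 ≤ α) :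
    closedBall c ρ ∩ {x | ⟪u, x - c⟫ ≤ β} ⊆ closedBall (c - τ • u) α := by
  rintro x ⟨hxc, hxu⟩
  rw [mem_closedBall, dist_eq_norm] at hxc ⊢
  have hsq : ‖x - (c - τ • u)‖ ^ 2 = ‖x - c‖ ^ 2 + 2 * τ * ⟪u, x - c⟫ + τ ^ 2 := by
    rw [show x - (c - τ • u) = (x - c) + τ • u by abel, norm_add_sq_real, real_inner_smul_right,
      norm_smul, Real.norm_of_nonneg hτ, hu, real_inner_comm]
    ring
  have hxc2 : ‖x - c‖ ^ 2 ≤ ρ ^ 2 := pow_le_pow_left₀ (norm_nonneg _) hxc 2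
  have : ‖x - (c - τ • u)‖ ^ 2 ≤ α ^ 2 := by
    rw [hsq]; nlinarith [mul_le_mul_of_nonneg_left hxu hτ]
  exact (pow_le_pow_iff_left₀ (norm_nonneg _) hα two_ne_zero).1 this

theorem inner_le_of_forall_subset_closedBall {X : Set E} {c u p : E} {ρ α b : ℝ}
    (hu : ‖u‖ = 1) (hρ : 0 ≤ ρ) (hρα : ρ ≤ α) (hXc : X ⊆ closedBall c ρ)
    (hXu : ∀ x ∈ X, ⟪u, x⟫ ≤ b) (hp : ∀ z, X ⊆ closedBall z α → p ∈ closedBall z α) :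
    ⟪u, p⟫ ≤ b + (α - √(α ^ 2 - ρ ^ 2)) := by
  set t := √(α ^ 2 - ρ ^ 2)
  have ht : t ^ 2 = α ^ 2 - ρ ^ 2 := Real.sq_sqrt (by nlinarith)
  set β := b - ⟪u, c⟫
  obtain ⟨τ, hτ, hτt, hτβ⟩ : ∃ τ, 0 ≤ τ ∧ t - β ≤ τ ∧ τ * (τ + 2 * β) ≤ α ^ 2 - ρ ^ 2 := by
    rcases le_total (t - β) 0 with h | h
    · exact ⟨0, le_rfl, h, by nlinarith⟩
    · exact ⟨t - β, h, le_rfl, by nlinarith [sq_nonneg β]⟩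
  have hXz : X ⊆ closedBall (c - τ • u) α := fun x hx =>
    closedBall_inter_setOf_inner_le_subset_closedBall hu hτ hτβ
      (hρ.trans hρα) ⟨hXc hx, by rw [mem_ofPred_eq, inner_sub_right]; linarith [hXu x hx]⟩
  have hpz : ⟪u, p - (c - τ • u)⟫ ≤ α := calc
    _ ≤ ‖u‖ * ‖p - (c - τ • u)‖ := real_inner_le_norm _ _
    _ ≤ α := by rw [hu, one_mul, ← dist_eq_norm]; exact hp _ hXz
  rw [inner_sub_right, inner_sub_right, real_inner_smul_right, real_inner_self_eq_norm_sq, hu]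
    at hpz
  linarith

theorem exists_norm_sub_le_of_forall_inner_le {K : Set E} (hK : Convex ℝ K) (hKc : IsComplete K)
    (hKne : K.Nonempty) {p : E} {ε : ℝ} (hε : 0 ≤ ε)
    (h : ∀ u b, ‖u‖ = 1 → (∀ x ∈ K, ⟪u, x⟫ ≤ b) → ⟪u, p⟫ ≤ b + ε) :
    ∃ q ∈ K, ‖p - q‖ ≤ ε := by
  obtain ⟨q, hq, hmin⟩ := exists_norm_eq_iInf_of_complete_convex hKne hKc hK p
  refine ⟨q, hq, ?_⟩
  rcases eq_or_ne (p - q) 0 with hpq | hpq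
  · rwa [hpq, norm_zero]
  set u := ‖p - q‖⁻¹ • (p - q)
  have hKu : ∀ x ∈ K, ⟪u, x⟫ ≤ ⟪u, q⟫ := fun x hx => by
    have := (norm_eq_iInf_iff_real_inner_le_zero hK hq).1 hmin x hx
    rw [← sub_nonpos, ← inner_sub_right, real_inner_smul_left]
    exact mul_nonpos_of_nonneg_of_nonpos (inv_nonneg.2 (norm_nonneg _)) this
  have hup : ⟪u, p - q⟫ = ‖p - q‖ := by
    rw [real_inner_smul_left, real_inner_self_eq_norm_sq]
    field_simp [norm_ne_zero_iff.2 hpq]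
  have := h u _ (norm_smul_inv_norm hpq) hKu
  rw [← hup, inner_sub_right]
  linarith

end InnerProductSpace

theorem stmt_13 {d : ℕ} (X : Set (EuclideanSpace ℝ (Fin d)))
    (hX : X.Nonempty) (hXc : IsCompact X)
    (c : EuclideanSpace ℝ (Fin d)) (ρ : ℝ)
    (hseb : IsSmallestEnclosingBall X c ρ)
    (α δ : ℝ) (hαρ : ρ ≤ α) (hδ : α - Real.sqrt (α ^ 2 - ρ ^ 2) ≤ δ) :
    (⋂ z ∈ {z : EuclideanSpace ℝ (Fin d) | X ⊆ Metric.closedBall z α},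
        Metric.closedBall z α) ⊆
      ⋃ y ∈ convexHull ℝ X, Metric.closedBall y δ := by
  intro p hp
  obtain ⟨x₀, hx₀⟩ := hX
  have hρ : 0 ≤ ρ := dist_nonneg.trans (hseb.1 hx₀)
  have hε : 0 ≤ α - √(α ^ 2 - ρ ^ 2) :=
    sub_nonneg.2 (Real.sqrt_le_iff.2 ⟨hρ.trans hαρ, by nlinarith⟩)
  obtain ⟨q, hq, hpq⟩ := exists_norm_sub_le_of_forall_inner_le (convex_convexHull ℝ X)
    hXc.convexHull_of_finiteDimensional.isClosed.isComplete ⟨x₀, subset_convexHull ℝ X hx₀⟩ hε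
    fun u b hu hb => inner_le_of_forall_subset_closedBall hu hρ hαρ hseb.1
      (fun x hx => hb x (subset_convexHull ℝ X hx)) fun z hz => mem_iInter₂.1 hp z hz
  exact mem_biUnion hq (by rw [mem_closedBall, dist_eq_norm]; linarith)
end

section
/- Let X ⊆ ℝ^d be a nonempty compact set and let closedBall(c, ρ) be a smallest enclosing ball of X. Then the center c belongs to the convex hull of X. -/
/-!
By Carathéodory, the convex hull `K` of `X` is the image of `simplex × X ^ (d + 1)` under
`(w, x) ↦ ∑ wᵢ xᵢ`, hence compact. Let `p` be the point of `K` nearest to `c`. Since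
`⟪c - p, x - p⟫ ≤ 0` for every `x ∈ K`, Pythagoras gives `‖x - p‖² ≤ ρ² - ‖c - p‖²` for `x ∈ X`,
so `X` fits in a ball about `p` of radius `√(ρ² - ‖c - p‖²)`. Minimality of `ρ` forces `c = p ∈ K`.
-/

open Metric Set

section CompactConvexHull

variable {E : Type*} [AddCommGroup E] [Module ℝ E] [FiniteDimensional ℝ E]

theorem convexHull_eq_image_stdSimplex_prod (s : Set E) :
    convexHull ℝ s =
      (fun p : (Fin (Module.finrank ℝ E + 1) → ℝ) × (Fin (Module.finrank ℝ E + 1) → E) =>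
          ∑ i, p.1 i • p.2 i) ''
        (stdSimplex ℝ _ ×ˢ univ.pi fun _ => s) := by
  refine Subset.antisymm (fun x hx => ?_) ?_
  · obtain ⟨x₀, hx₀⟩ := convexHull_nonempty_iff.mp ⟨x, hx⟩
    obtain ⟨ι, _, z, w, hzs, hind, hwpos, hwsum, rfl⟩ := eq_pos_convex_span_of_mem_convexHull hx
    have hcard : Fintype.card ι ≤ Fintype.card (Fin (Module.finrank ℝ E + 1)) := by
      simpa using hind.card_le_finrank_succ.trans
        (Nat.succ_le_succ (Submodule.finrank_le (vectorSpan ℝ (range z))))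
    obtain ⟨g⟩ := Function.Embedding.nonempty_of_card_le hcard
    have hw' : ∀ j ∉ range g, Function.extend g w 0 j = 0 := fun j hj =>
      Function.extend_apply' _ _ _ hj
    refine ⟨(Function.extend g w 0, Function.extend g z fun _ => x₀),
      ⟨⟨fun j => ?_, ?_⟩, fun j _ => ?_⟩, ?_⟩
    · dsimp only
      rcases range_extend_subset g w 0 (mem_range_self j) with ⟨i, hi⟩ | ⟨_, -, hi⟩
      · exact hi ▸ (hwpos i).le
      · exact hi ▸ le_rfl
    · rw [← hwsum]
      exact (Fintype.sum_of_injective g g.injective w _ hw'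
        fun i => (g.injective.extend_apply _ _ i).symm).symm
    · dsimp only
      rcases range_extend_subset g z _ (mem_range_self j) with hj | ⟨_, -, hj⟩
      · exact hzs hj
      · exact hj ▸ hx₀
    · refine (Fintype.sum_of_injective g g.injective _ _ (fun j hj => ?_) fun i => ?_).symm
      · simp only [hw' j hj, zero_smul]
      · simp only [g.injective.extend_apply]
  · rintro _ ⟨⟨w, z⟩, ⟨⟨hw₀, hw₁⟩, hz⟩, rfl⟩
    exact mem_convexHull_of_exists_fintype w z hw₀ hw₁ (fun i => hz i (mem_univ i)) rfl

theorem IsCompact.convexHull [TopologicalSpace E] [ContinuousAdd E] [ContinuousSMul ℝ E]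
    {s : Set E} (hs : IsCompact s) : IsCompact (convexHull ℝ s) := by
  rw [convexHull_eq_image_stdSimplex_prod]
  exact ((isCompact_stdSimplex ℝ _).prod (isCompact_univ_pi fun _ => hs)).image (by fun_prop)

end CompactConvexHull

section EnclosingBall

variable {F : Type*} [NormedAddCommGroup F] [InnerProductSpace ℝ F]

theorem norm_sub_sq_add_norm_sub_sq_le_of_inner_nonpos {x c p : F}
    (h : inner ℝ (c - p) (x - p) ≤ 0) : ‖x - p‖ ^ 2 + ‖c - p‖ ^ 2 ≤ ‖x - c‖ ^ 2 := by
  rw [show x - c = (x - p) - (c - p) by abel, norm_sub_sq_real (x - p), real_inner_comm]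
  linarith

theorem mem_of_subset_of_minimal_closedBall {X K : Set F} {c : F} {ρ : ℝ}
    (hK : Convex ℝ K) (hKc : IsComplete K) (hXK : X ⊆ K) (hX : X.Nonempty)
    (hXc : X ⊆ closedBall c ρ) (hmin : ∀ c' ρ', X ⊆ closedBall c' ρ' → ρ ≤ ρ') : c ∈ K := by
  obtain ⟨x₀, hx₀⟩ := hX
  obtain ⟨p, hpK, hp⟩ := exists_norm_eq_iInf_of_complete_convex ⟨x₀, hXK hx₀⟩ hKc hK c
  have hobtuse := (norm_eq_iInf_iff_real_inner_le_zero hK hpK).mp hp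
  have hshrink : ∀ x ∈ X, ‖x - p‖ ^ 2 ≤ ρ ^ 2 - ‖c - p‖ ^ 2 := fun x hx => by
    have hxc : ‖x - c‖ ≤ ρ := mem_closedBall_iff_norm.mp (hXc hx)
    have := norm_sub_sq_add_norm_sub_sq_le_of_inner_nonpos (hobtuse x (hXK hx))
    nlinarith [norm_nonneg (x - c)]
  have hρ : ρ ≤ √(ρ ^ 2 - ‖c - p‖ ^ 2) := hmin p _ fun x hx =>
    mem_closedBall_iff_norm.mpr (Real.le_sqrt_of_sq_le (hshrink x hx))
  have hρsq : ρ ^ 2 ≤ ρ ^ 2 - ‖c - p‖ ^ 2 :=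
    (Real.le_sqrt (dist_nonneg.trans (hXc hx₀)) ((sq_nonneg _).trans (hshrink x₀ hx₀))).mp hρ
  have hcp : ‖c - p‖ = 0 := by nlinarith [norm_nonneg (c - p)]
  rwa [norm_sub_eq_zero_iff.mp hcp]

end EnclosingBall

theorem stmt_14 {d : ℕ} (X : Set (EuclideanSpace ℝ (Fin d)))
    (hX : X.Nonempty) (hXc : IsCompact X)
    (c : EuclideanSpace ℝ (Fin d)) (ρ : ℝ)
    (hseb : IsSmallestEnclosingBall X c ρ) :
    c ∈ convexHull ℝ X :=
  mem_of_subset_of_minimal_closedBall (convex_convexHull ℝ X) hXc.convexHull.isClosed.isComplete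
    (subset_convexHull ℝ X) hX hseb.1 hseb.2
end

section
/- Let a, b ∈ ℝ^d, let x be a point on the closed segment [a, b], and let ε and α be real numbers with 0 ≤ ε ≤ min(‖a − x‖, ‖b − x‖) and ε ≤ α. Then closedBall(a, α) ∩ closedBall(b, α) ⊆ closedBall(x, √(α² − ε²)). -/
/-!
Write `x = u • a + v • b`. The vectors `x - a = v • (b - a)` and `x - b = -u • (b - a)` point in
opposite directions, so for every `y` the angle at `x` in one of the triangles `a x y`, `b x y`
is at least a right angle. For that endpoint `z`, `‖y - x‖² + ‖x - z‖² ≤ ‖y - z‖² ≤ α²`, and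
`‖x - z‖ ≥ ε` gives `‖y - x‖² ≤ α² - ε²`.
-/

open Metric Set

open scoped RealInnerProductSpace

section

variable {E : Type*} [NormedAddCommGroup E] [InnerProductSpace ℝ E]

lemma inner_sub_nonneg_or_of_mem_segment {a b x : E} (hx : x ∈ segment ℝ a b) (y : E) :
    0 ≤ ⟪y - x, x - a⟫ ∨ 0 ≤ ⟪y - x, x - b⟫ := by
  obtain ⟨u, v, hu, hv, huv, rfl⟩ := hx
  have hxa : u • a + v • b - a = v • (b - a) := by
    linear_combination (norm := module) huv • a
  have hxb : u • a + v • b - b = -(u • (b - a)) := by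
    linear_combination (norm := module) huv • b
  rw [hxa, hxb, inner_neg_right, real_inner_smul_right, real_inner_smul_right]
  rcases le_total 0 ⟪y - (u • a + v • b), b - a⟫ with hc | hc
  · exact .inl (mul_nonneg hv hc)
  · exact .inr (neg_nonneg.mpr (mul_nonpos_of_nonneg_of_nonpos hu hc))

lemma norm_sub_sq_add_norm_sub_sq_le {x y z : E} (h : 0 ≤ ⟪y - x, x - z⟫) :
    ‖y - x‖ ^ 2 + ‖x - z‖ ^ 2 ≤ ‖y - z‖ ^ 2 := by
  have hsum := norm_add_sq_real (y - x) (x - z)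
  rw [sub_add_sub_cancel] at hsum
  linarith

lemma norm_sub_le_sqrt_of_inner_nonneg {x y z : E} {ε α : ℝ} (h : 0 ≤ ⟪y - x, x - z⟫)
    (hyz : ‖y - z‖ ≤ α) (hε0 : 0 ≤ ε) (hεz : ε ≤ ‖z - x‖) :
    ‖y - x‖ ≤ Real.sqrt (α ^ 2 - ε ^ 2) := by
  apply Real.le_sqrt_of_sq_le
  have hpyth := norm_sub_sq_add_norm_sub_sq_le h
  have hyz2 : ‖y - z‖ ^ 2 ≤ α ^ 2 := pow_le_pow_left₀ (norm_nonneg _) hyz 2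
  have hεz2 : ε ^ 2 ≤ ‖x - z‖ ^ 2 := by
    rw [norm_sub_rev]; exact pow_le_pow_left₀ hε0 hεz 2
  linarith

end

theorem stmt_16_general {d : ℕ} (a b x : EuclideanSpace ℝ (Fin d))
    (hx : x ∈ segment ℝ a b) (ε α : ℝ)
    (hε0 : 0 ≤ ε) (hεa : ε ≤ ‖a - x‖) (hεb : ε ≤ ‖b - x‖) :
    Metric.closedBall a α ∩ Metric.closedBall b α ⊆
      Metric.closedBall x (Real.sqrt (α ^ 2 - ε ^ 2)) := by
  rintro y ⟨hya, hyb⟩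
  rw [mem_closedBall, dist_eq_norm] at hya hyb ⊢
  rcases inner_sub_nonneg_or_of_mem_segment hx y with h | h
  · exact norm_sub_le_sqrt_of_inner_nonneg h hya hε0 hεa
  · exact norm_sub_le_sqrt_of_inner_nonneg h hyb hε0 hεb

theorem stmt_16 {d : ℕ} (a b x : EuclideanSpace ℝ (Fin d))
    (hx : x ∈ segment ℝ a b) (ε α : ℝ)
    (hε0 : 0 ≤ ε) (hεa : ε ≤ ‖a - x‖) (hεb : ε ≤ ‖b - x‖) (hεα : ε ≤ α) :
    Metric.closedBall a α ∩ Metric.closedBall b α ⊆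
      Metric.closedBall x (Real.sqrt (α ^ 2 - ε ^ 2)) :=
  stmt_16_general a b x hx ε α hε0 hεa hεb
end

section
/- Let p ∈ ℝ^d, let δ > 0, and let Z ⊆ ℝ^d be a convex compact set with closedBall(p, δ) ⊆ Z. Let 0 ≤ t < t' ≤ 1 and let α be a real number with (t' − t)·δ ≤ α. Then ⋂_{z ∈ Z} closedBall(p + t'·(z − p), α) ⊆ ⋂_{z ∈ Z} closedBall(p + t·(z − p), √(α² − (t' − t)²·δ²)). -/
open Metric Set

theorem stmt_18 {d : ℕ} (p : EuclideanSpace ℝ (Fin d)) (δ : ℝ) (hδ : 0 < δ)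
    (Z : Set (EuclideanSpace ℝ (Fin d))) (hZconv : Convex ℝ Z) (hZc : IsCompact Z)
    (hball : Metric.closedBall p δ ⊆ Z)
    (t t' α : ℝ) (ht0 : 0 ≤ t) (htt' : t < t') (ht'1 : t' ≤ 1)
    (hα : (t' - t) * δ ≤ α) :
    (⋂ z ∈ Z, Metric.closedBall (p + t' • (z - p)) α) ⊆
      ⋂ z ∈ Z, Metric.closedBall (p + t • (z - p))
        (Real.sqrt (α ^ 2 - (t' - t) ^ 2 * δ ^ 2)) := by
  intro x hx
  simp only [Set.mem_iInter, Metric.mem_closedBall] at hx ⊢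
  intro z hz
  have hs0 : 0 < t' - t := by linarith
  have ht'0 : 0 < t' := by linarith
  set v := x - (p + t • (z - p)) with hv
  have hdv : dist x (p + t • (z - p)) = ‖v‖ := by rw [dist_eq_norm]
  have hsq : α - (t' - t) * δ ≤ Real.sqrt (α ^ 2 - (t' - t) ^ 2 * δ ^ 2) := by
    have h1 : 0 ≤ α - (t' - t) * δ := by linarith
    rw [show α ^ 2 - (t' - t) ^ 2 * δ ^ 2
        = (α - (t'-t)*δ) * (α + (t'-t)*δ) by ring]
    calc α - (t' - t) * δ = Real.sqrt ((α - (t'-t)*δ)^2) := by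
          rw [Real.sqrt_sq h1]
      _ ≤ _ := by
          apply Real.sqrt_le_sqrt
          nlinarith [mul_pos hs0 hδ]
  rcases eq_or_ne v 0 with h0 | h0
  · rw [hdv, h0, norm_zero]; exact Real.sqrt_nonneg _
  · have hnv : 0 < ‖v‖ := norm_pos_iff.mpr h0
    set u := -(‖v‖⁻¹ • v) with hu
    have hnu : ‖u‖ = 1 := by
      rw [hu, norm_neg, norm_smul, norm_inv, norm_norm,
        inv_mul_cancel₀ (norm_ne_zero_iff.mpr h0)]
    have hq : p + δ • u ∈ Z := by
      apply hball
      simp only [Metric.mem_closedBall, dist_eq_norm, add_sub_cancel_left,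
        norm_smul, hnu, mul_one, Real.norm_eq_abs, abs_of_pos hδ, le_refl]
    have hw : (t/t') • z + (1 - t/t') • (p + δ • u) ∈ Z := by
      apply hZconv hz hq (by positivity)
      · have : t / t' ≤ 1 := by
          rw [div_le_one ht'0]; linarith
        linarith
      · ring
    have hcen : p + t' • ((t/t') • z + (1 - t/t') • (p + δ • u) - p)
        = p + t • (z - p) + ((t' - t) * δ) • u := by
      have h : t' * (t / t') = t := by field_simp
      match_scalars <;> field_simp <;> ring
    have hb := hx _ hw
    rw [hcen] at hb
    have hdist : dist x (p + t • (z - p) + ((t' - t) * δ) • u)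
        = ‖v‖ + (t' - t) * δ := by
      rw [dist_eq_norm]
      have : x - (p + t • (z - p) + ((t' - t) * δ) • u)
          = (1 + (t' - t) * δ * ‖v‖⁻¹) • v := by
        rw [hu, hv]
        match_scalars <;> ring
      rw [this, norm_smul, Real.norm_eq_abs]
      have hpos : 0 < 1 + (t' - t) * δ * ‖v‖⁻¹ := by positivity
      rw [abs_of_pos hpos]
      field_simp
    rw [hdist] at hb
    rw [hdv]
    linarith
end
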